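/- arXiv:1801.05934 — 4 statements merged into one kernel-verified Lean document; each statement's English description precedes it below -/
import Mathlib

section
/- The boundaries of the good region G are negligible: for every ε ∈ (0, 1/8), lim_{N→∞} N^{1+α} · μ_N(∂^in G) = 0 and lim_{N→∞} N^{1+α} · μ_N(∂^out G) = 0. -/
open Filter Topology Finset
open scoped Classical

noncomputable section

/-- `a(n)`: `a(0)=1`, `a(n)=n^α` for `n ≥ 1`. -/
def aZR (α : ℝ) (n : ℕ) : ℝ := if n = 0 then 1 else (n : ℝ) ^ α

/-- The set of configurations of `N` particles on `S`. -/
def configs (S : Type*) [Fintype S] (N : ℕ) : Finset (S → ℕ) :=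
  (Fintype.piFinset fun _ : S => Finset.range (N + 1)).filter fun η => ∑ x, η x = N

/-- `π_N = ⌊N^{1/α+1/2}⌋`. -/
def piZR (α : ℝ) (N : ℕ) : ℕ := ⌊(N : ℝ) ^ (1 / α + 1 / 2)⌋₊

/-- The enlarged valley `D^x = {η : η_x ≥ N(1-2ε)}`. -/
def Dwell (S : Type*) [Fintype S] (ε : ℝ) (N : ℕ) (x : S) : Finset (S → ℕ) :=
  (configs S N).filter fun η => (N : ℝ) * (1 - 2 * ε) ≤ (η x : ℝ)

/-- The tube `T^{x,y} = {η : η_x + η_y ≥ N - π_N}`. -/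
def Ttube (S : Type*) [Fintype S] (α : ℝ) (N : ℕ) (x y : S) : Finset (S → ℕ) :=
  (configs S N).filter fun η => N ≤ η x + η y + piZR α N

/-- The saddle tube `J^{x,y} = T^{x,y} ∖ (D^x ∪ D^y)`. -/
def Jtube (S : Type*) [Fintype S] (α ε : ℝ) (N : ℕ) (x y : S) : Finset (S → ℕ) :=
  Ttube S α N x y \ (Dwell S ε N x ∪ Dwell S ε N y)

/-- The good region `G`. -/
def Gset (S : Type*) [Fintype S] (α ε : ℝ) (Sstar : Finset S) (N : ℕ) :
    Finset (S → ℕ) :=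
  Sstar.biUnion (fun x => Dwell S ε N x) ∪
    Sstar.biUnion (fun x => (Sstar.erase x).biUnion fun y => Jtube S α ε N x y)

/-- Inner boundary of the saddle tube. -/
def bdInJ (S : Type*) [Fintype S] (α ε : ℝ) (N : ℕ) (x y : S) : Finset (S → ℕ) :=
  (Jtube S α ε N x y).filter fun η => η x + η y + piZR α N = N

/-- Outer boundary of the saddle tube. -/
def bdOutJ (S : Type*) [Fintype S] (α ε : ℝ) (Sstar : Finset S) (N : ℕ) (x y : S) :
    Finset (S → ℕ) :=
  ((configs S N) \ Gset S α ε Sstar N).filter fun η => η x + η y + piZR α N + 1 = N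

/-- Inner boundary of the enlarged valley. -/
def bdInD (S : Type*) [Fintype S] (α ε : ℝ) (Sstar : Finset S) (N : ℕ) (x : S) :
    Finset (S → ℕ) :=
  ((Dwell S ε N x).filter fun η => η x = ⌈(N : ℝ) * (1 - 2 * ε)⌉₊) \
    (Sstar.erase x).biUnion (fun y => Ttube S α N x y)

/-- Outer boundary of the enlarged valley. -/
def bdOutD (S : Type*) [Fintype S] (α ε : ℝ) (Sstar : Finset S) (N : ℕ) (x : S) :
    Finset (S → ℕ) :=
  (((configs S N) \ Gset S α ε Sstar N).filter
      fun η => η x + 1 = ⌈(N : ℝ) * (1 - 2 * ε)⌉₊) \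
    (Sstar.erase x).biUnion (fun y => Ttube S α N x y)

/-- Inner boundary of `G`. -/
def bdInG (S : Type*) [Fintype S] (α ε : ℝ) (Sstar : Finset S) (N : ℕ) :
    Finset (S → ℕ) :=
  Sstar.biUnion (fun x => bdInD S α ε Sstar N x) ∪
    Sstar.biUnion (fun x => (Sstar.erase x).biUnion fun y => bdInJ S α ε N x y)

/-- Outer boundary of `G`. -/
def bdOutG (S : Type*) [Fintype S] (α ε : ℝ) (Sstar : Finset S) (N : ℕ) :
    Finset (S → ℕ) :=
  Sstar.biUnion (fun x => bdOutD S α ε Sstar N x) ∪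
    Sstar.biUnion (fun x => (Sstar.erase x).biUnion fun y => bdOutJ S α ε Sstar N x y)

end

/-!
Since `m⋆ ≤ 1` with equality on `S⋆ ≠ ∅`, the configuration with all particles on one site of
`S⋆` gives `Z_N ≥ 1`, so `μ_N(η) ≤ N^α ∏_z m⋆(z)^{η_z} / a(η_z)`. In such a product sum, two
coordinates that are determined by the others can be bounded pointwise and the remaining ones
summed out freely, each free sum being at most `∑ 1/a(n) ≤ 3`, or `≤ 2 C^{1-α}` over `n ≥ C`.

On `∂J^{x,y}` both `η_x, η_y ≥ εN` and the remaining mass `π_N` puts `π_N/|S|` particles on some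
site `w`; pinning `y, w` and summing `η_x` over `n ≥ εN` gives `N^{1+α} μ_N = O(N² π_N^{-α})
= O(N^{1-α/2})`. On `∂D^x` we have `η_x ≥ N/2` and a site `w ≠ x` carries `εN/|S|` particles. If
`w ∉ S⋆`, the factor `m⋆(w)^{η_w}` is exponentially small; if `w ∈ S⋆`, being outside the tube
`T^{x,w}` forces `π_N/|S|` particles on a third site, and `N^{1+α} μ_N = O(N π_N^{1-α})
= O(N^{1/2+1/α-α/2})`. Both exponents are negative because `α > 2`.
-/

lemma sum_le_sum_sum_filter_of_cover {ι β : Type*} {P : Finset β} {R : Finset ι}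
    {p : ι → β → Prop} [∀ i, DecidablePred (p i)] {f : β → ℝ} (hf : ∀ b ∈ P, 0 ≤ f b)
    (hcov : ∀ b ∈ P, ∃ i ∈ R, p i b) :
    ∑ b ∈ P, f b ≤ ∑ i ∈ R, ∑ b ∈ P with p i b, f b := by
  simp_rw [sum_filter]
  rw [sum_comm]
  refine sum_le_sum fun b hb => ?_
  obtain ⟨i, hi, hpi⟩ := hcov b hb
  calc f b = if p i b then f b else 0 := (if_pos hpi).symm
    _ ≤ ∑ j ∈ R, if p j b then f b else 0 :=
      single_le_sum (f := fun j => if p j b then f b else 0)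
        (fun j _ => by split_ifs <;> simp [hf b hb]) hi

lemma sum_biUnion_le_sum_sum {ι β : Type*} [DecidableEq β] (s : Finset ι) (t : ι → Finset β)
    {f : β → ℝ} (hf : ∀ b, 0 ≤ f b) : ∑ b ∈ s.biUnion t, f b ≤ ∑ i ∈ s, ∑ b ∈ t i, f b :=
  (sum_le_sum_sum_filter_of_cover (p := fun i b => b ∈ t i) (fun b _ => hf b)
    (fun _ hb => mem_biUnion.mp hb)).trans <| sum_le_sum fun _ _ =>
      sum_le_sum_of_subset_of_nonneg (fun _ hb => (mem_filter.mp hb).2) fun b _ _ => hf b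

lemma sum_union_le_add {β : Type*} [DecidableEq β] (A B : Finset β) {f : β → ℝ}
    (hf : ∀ b, 0 ≤ f b) :
    ∑ b ∈ A ∪ B, f b ≤ ∑ b ∈ A, f b + ∑ b ∈ B, f b := by
  rw [← sum_union_inter]
  exact le_add_of_nonneg_right (sum_nonneg fun b _ => hf b)

lemma sum_union_biUnion_le {ι β : Type*} [DecidableEq β] (s : Finset ι) (D : ι → Finset β)
    (J : ι → ι → Finset β) {f : β → ℝ} (hf : ∀ b, 0 ≤ f b) :
    ∑ b ∈ s.biUnion D ∪ s.biUnion (fun x => (s.erase x).biUnion (J x)), f b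
      ≤ ∑ x ∈ s, ∑ b ∈ D x, f b + ∑ x ∈ s, ∑ y ∈ s.erase x, ∑ b ∈ J x y, f b :=
  (sum_union_le_add _ _ hf).trans <| add_le_add (sum_biUnion_le_sum_sum _ _ hf) <|
    (sum_biUnion_le_sum_sum _ _ hf).trans <| sum_le_sum fun _ _ => sum_biUnion_le_sum_sum _ _ hf

lemma exists_coord_ge_div_card {S : Type*} [Fintype S] (R : Finset S) (η : S → ℕ) {M : ℝ}
    (hM : 0 < M) (hsum : M ≤ ∑ z ∈ R, η z) : ∃ z ∈ R, M / Fintype.card S ≤ η z := by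
  have hR : R.Nonempty := by
    rw [nonempty_iff_ne_empty]
    rintro rfl
    simp only [sum_empty, Nat.cast_zero] at hsum
    linarith
  obtain ⟨z, hz, hmax⟩ := exists_max_image R η hR
  have hS : (0 : ℝ) < Fintype.card S := by exact_mod_cast Fintype.card_pos_iff.mpr ⟨z⟩
  refine ⟨z, hz, (div_le_iff₀' hS).mpr ?_⟩
  calc M ≤ ∑ z ∈ R, η z := hsum
    _ ≤ ((#R • η z : ℕ) : ℝ) := by exact_mod_cast sum_le_card_nsmul R η (η z) hmax
    _ ≤ Fintype.card S * η z := by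
      rw [smul_eq_mul, Nat.cast_mul]
      gcongr
      exact_mod_cast card_le_univ R

lemma sum_prod_le_prod_sum_image {S β : Type*} [DecidableEq β] (T : Finset S) (P : Finset (S → β))
    (hinj : ∀ η₁ ∈ P, ∀ η₂ ∈ P, (∀ z ∈ T, η₁ z = η₂ z) → η₁ = η₂)
    (g : S → β → ℝ) (hg : ∀ z n, 0 ≤ g z n) :
    ∑ η ∈ P, ∏ z ∈ T, g z (η z) ≤ ∏ z ∈ T, ∑ n ∈ P.image (· z), g z n := by
  let res : (S → β) → (T → β) := fun η z => η z
  have hres : Set.InjOn res P := fun η₁ h₁ η₂ h₂ h =>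
    hinj η₁ h₁ η₂ h₂ fun z hz => congrFun h ⟨z, hz⟩
  rw [← prod_coe_sort T, prod_univ_sum]
  calc ∑ η ∈ P, ∏ z ∈ T, g z (η z) = ∑ ξ ∈ P.image res, ∏ z : T, g z (ξ z) := by
        rw [sum_image hres]
        exact sum_congr rfl fun η _ => (prod_coe_sort T fun z => g z (η z)).symm
    _ ≤ _ := by
      refine sum_le_sum_of_subset_of_nonneg ?_ fun ξ _ _ => prod_nonneg fun z _ => hg _ _
      intro ξ hξ
      obtain ⟨η, hη, rfl⟩ := mem_image.mp hξ
      exact Fintype.mem_piFinset.mpr fun z => mem_image_of_mem (· z) hη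

section Configurations

variable {S : Type*} [Fintype S]

lemma mem_configs_iff {N : ℕ} {η : S → ℕ} : η ∈ configs S N ↔ ∑ z, η z = N := by
  refine ⟨fun h => (mem_filter.mp h).2, fun h => mem_filter.mpr ⟨?_, h⟩⟩
  refine Fintype.mem_piFinset.mpr fun z => mem_range.mpr (Nat.lt_succ_of_le ?_)
  exact h ▸ single_le_sum (fun _ _ => Nat.zero_le _) (mem_univ z)

lemma eq_of_sum_eq_of_forall_ne {η₁ η₂ : S → ℕ} (w : S) (hsum : ∑ z, η₁ z = ∑ z, η₂ z)
    (h : ∀ z, z ≠ w → η₁ z = η₂ z) : η₁ = η₂ := by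
  have hrest : ∑ z ∈ univ.erase w, η₁ z = ∑ z ∈ univ.erase w, η₂ z :=
    sum_congr rfl fun z hz => h z (ne_of_mem_erase hz)
  have hw : η₁ w = η₂ w := by
    rw [← add_sum_erase _ _ (mem_univ w), ← add_sum_erase _ _ (mem_univ w), hrest] at hsum
    omega
  funext z
  by_cases hz : z = w
  · exact hz ▸ hw
  · exact h z hz

/-- The two sites `u, v` are pinned: `η u` is determined by the other coordinates, and so is
`η v` by conservation of mass. -/
lemma sum_prod_le_of_pinned {N : ℕ} {P : Finset (S → ℕ)} (hP : P ⊆ configs S N) {u v : S}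
    (huv : u ≠ v)
    (hu : ∀ η₁ ∈ P, ∀ η₂ ∈ P, (∀ z ∈ ({u, v} : Finset S)ᶜ, η₁ z = η₂ z) → η₁ u = η₂ u)
    {g : S → ℕ → ℝ} (hg : ∀ z n, 0 ≤ g z n) {K : ℝ} (hK0 : 0 ≤ K)
    (hK : ∀ η ∈ P, g u (η u) * g v (η v) ≤ K) :
    ∑ η ∈ P, ∏ z, g z (η z) ≤ K * ∏ z ∈ ({u, v} : Finset S)ᶜ, ∑ n ∈ P.image (· z), g z n := by
  set T := ({u, v} : Finset S)ᶜ
  have hinj : ∀ η₁ ∈ P, ∀ η₂ ∈ P, (∀ z ∈ T, η₁ z = η₂ z) → η₁ = η₂ := by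
    intro η₁ h₁ η₂ h₂ hT
    have hsum : ∑ z, η₁ z = ∑ z, η₂ z := by
      rw [mem_configs_iff.mp (hP h₁), mem_configs_iff.mp (hP h₂)]
    refine eq_of_sum_eq_of_forall_ne v hsum fun z hzv => ?_
    by_cases hzu : z = u
    · exact hzu ▸ hu η₁ h₁ η₂ h₂ hT
    · exact hT z (by simp [T, hzu, hzv])
  calc ∑ η ∈ P, ∏ z, g z (η z)
      = ∑ η ∈ P, (∏ z ∈ T, g z (η z)) * (g u (η u) * g v (η v)) := by
        refine sum_congr rfl fun η _ => ?_
        rw [← prod_compl_mul_prod {u, v}, prod_pair huv]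
    _ ≤ ∑ η ∈ P, (∏ z ∈ T, g z (η z)) * K :=
        sum_le_sum fun η hη =>
          mul_le_mul_of_nonneg_left (hK η hη) (prod_nonneg fun z _ => hg z _)
    _ = K * ∑ η ∈ P, ∏ z ∈ T, g z (η z) := by rw [← sum_mul, mul_comm]
    _ ≤ K * ∏ z ∈ T, ∑ n ∈ P.image (· z), g z n :=
        mul_le_mul_of_nonneg_left (sum_prod_le_prod_sum_image T P hinj g hg) hK0

end Configurations

section Weights

lemma aZR_pos (α : ℝ) (n : ℕ) : 0 < aZR α n := by
  unfold aZR
  split_ifs with h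
  · exact one_pos
  · exact Real.rpow_pos_of_pos (Nat.cast_pos.mpr (Nat.pos_of_ne_zero h)) α

variable {α : ℝ}

lemma one_le_aZR (hα : 0 ≤ α) (n : ℕ) : 1 ≤ aZR α n := by
  unfold aZR
  split_ifs with h
  · exact le_rfl
  · exact Real.one_le_rpow (by exact_mod_cast Nat.one_le_iff_ne_zero.mpr h) hα

lemma inv_aZR_le_rpow_neg (hα : 0 ≤ α) {C : ℝ} (hC : 0 < C) {n : ℕ} (hn : C ≤ n) :
    (aZR α n)⁻¹ ≤ C ^ (-α) := by
  have hn0 : n ≠ 0 := by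
    rintro rfl
    simp only [Nat.cast_zero] at hn
    linarith
  rw [aZR, if_neg hn0, ← Real.rpow_neg (Nat.cast_nonneg n)]
  exact Real.rpow_le_rpow_of_nonpos hC hn (neg_nonpos.mpr hα)

/-- Comparison with `∑ 1 / n ^ 2` over `n ≥ C`. -/
lemma sum_inv_aZR_le_of_le (hα : 2 ≤ α) {C : ℝ} (hC : 1 ≤ C) (D : Finset ℕ)
    (hD : ∀ n ∈ D, C ≤ n) : ∑ n ∈ D, (aZR α n)⁻¹ ≤ 2 * C ^ (1 - α) := by
  have hC0 : 0 < C := by linarith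
  set m := ⌈C⌉₊
  have hm : 1 ≤ m := Nat.one_le_ceil_iff.mpr hC0
  have hCm : C ≤ m := Nat.le_ceil C
  obtain ⟨M, hM⟩ : ∃ M, ∀ n ∈ D, n < M :=
    ⟨D.sup id + 1, fun n hn => Nat.lt_succ_of_le (le_sup (f := id) hn)⟩
  have hsub : D ⊆ Ioo (m - 1) M := fun n hn =>
    mem_Ioo.mpr ⟨by have := Nat.ceil_le.mpr (hD n hn); omega, hM n hn⟩
  have hpt : ∀ n ∈ D, (aZR α n)⁻¹ ≤ C ^ (2 - α) * ((n : ℝ) ^ 2)⁻¹ := by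
    intro n hn
    have hn0 : (0 : ℝ) < n := hC0.trans_le (hD n hn)
    have hsplit : (aZR α n)⁻¹ = (n : ℝ) ^ (2 - α) * ((n : ℝ) ^ 2)⁻¹ := by
      rw [aZR, if_neg (Nat.cast_pos.mp hn0).ne', Real.rpow_sub hn0, Real.rpow_two]
      field_simp
    rw [hsplit]
    exact mul_le_mul_of_nonneg_right
      (Real.rpow_le_rpow_of_nonpos hC0 (hD n hn) (by linarith)) (by positivity)
  have hm' : ((m - 1 : ℕ) : ℝ) + 1 = m := by exact_mod_cast Nat.sub_add_cancel hm
  calc ∑ n ∈ D, (aZR α n)⁻¹ ≤ ∑ n ∈ D, C ^ (2 - α) * ((n : ℝ) ^ 2)⁻¹ := sum_le_sum hpt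
    _ ≤ C ^ (2 - α) * ∑ n ∈ Ioo (m - 1) M, ((n : ℝ) ^ 2)⁻¹ := by
        rw [← mul_sum]
        exact mul_le_mul_of_nonneg_left
          (sum_le_sum_of_subset_of_nonneg hsub fun _ _ _ => by positivity) (by positivity)
    _ ≤ C ^ (2 - α) * (2 / C) := by
        gcongr
        calc ∑ n ∈ Ioo (m - 1) M, ((n : ℝ) ^ 2)⁻¹ ≤ 2 / (((m - 1 : ℕ) : ℝ) + 1) :=
              sum_Ioo_inv_sq_le _ _
          _ ≤ 2 / C := by rw [hm']; gcongr
    _ = 2 * C ^ (1 - α) := by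
        rw [show (2 : ℝ) - α = 1 - α + 1 by ring, Real.rpow_add_one hC0.ne']
        field_simp

lemma sum_inv_aZR_le_three (hα : 2 ≤ α) (D : Finset ℕ) : ∑ n ∈ D, (aZR α n)⁻¹ ≤ 3 := by
  rw [← sum_filter_add_sum_filter_not D (· = 0)]
  have hzero : ∑ n ∈ D with n = 0, (aZR α n)⁻¹ ≤ 1 := by
    calc ∑ n ∈ D with n = 0, (aZR α n)⁻¹ ≤ ∑ n ∈ {0}, (aZR α n)⁻¹ :=
          sum_le_sum_of_subset_of_nonneg (fun n hn => by simp [(mem_filter.mp hn).2])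
            fun n _ _ => (inv_pos.mpr (aZR_pos α n)).le
      _ = 1 := by simp [aZR]
  have hpos := sum_inv_aZR_le_of_le hα le_rfl (D.filter (¬ · = 0)) fun n hn => by
    exact_mod_cast Nat.one_le_iff_ne_zero.mpr (mem_filter.mp hn).2
  rw [Real.one_rpow] at hpos
  linarith

/-- The factor `m⋆(z) ^ η_z / a(η_z)` of the Gibbs weight of a configuration. -/
noncomputable def siteWeight (α q : ℝ) (n : ℕ) : ℝ := q ^ n / aZR α n

variable {q θ : ℝ} {n : ℕ}

lemma siteWeight_nonneg (hq : 0 ≤ q) : 0 ≤ siteWeight α q n :=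
  div_nonneg (pow_nonneg hq n) (aZR_pos α n).le

lemma siteWeight_le_inv_aZR (hq0 : 0 ≤ q) (hq1 : q ≤ 1) : siteWeight α q n ≤ (aZR α n)⁻¹ := by
  rw [siteWeight, div_eq_mul_inv]
  exact mul_le_of_le_one_left (inv_nonneg.mpr (aZR_pos α n).le) (pow_le_one₀ hq0 hq1)

lemma siteWeight_le_rpow_neg (hα : 0 ≤ α) (hq0 : 0 ≤ q) (hq1 : q ≤ 1) {C : ℝ} (hC : 0 < C)
    (hn : C ≤ n) : siteWeight α q n ≤ C ^ (-α) :=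
  (siteWeight_le_inv_aZR hq0 hq1).trans (inv_aZR_le_rpow_neg hα hC hn)

lemma siteWeight_le_exp (hα : 0 ≤ α) (hq0 : 0 ≤ q) (hθ : 0 ≤ θ) (hq : q ≤ Real.exp (-θ))
    {B : ℝ} (hn : B ≤ n) : siteWeight α q n ≤ Real.exp (-(θ * B)) :=
  calc siteWeight α q n ≤ q ^ n := div_le_self (pow_nonneg hq0 n) (one_le_aZR hα n)
    _ ≤ Real.exp (-θ) ^ n := pow_le_pow_left₀ hq0 hq n
    _ = Real.exp (-(θ * n)) := by rw [← Real.exp_nat_mul]; ring_nf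
    _ ≤ Real.exp (-(θ * B)) := Real.exp_le_exp.mpr (by nlinarith)

lemma sum_siteWeight_le_three (hα : 2 ≤ α) (hq0 : 0 ≤ q) (hq1 : q ≤ 1) (D : Finset ℕ) :
    ∑ n ∈ D, siteWeight α q n ≤ 3 :=
  (sum_le_sum fun _ _ => siteWeight_le_inv_aZR hq0 hq1).trans (sum_inv_aZR_le_three hα D)

end Weights

section Estimates

variable {S : Type*} [Fintype S] {α : ℝ} {q : S → ℝ} {N : ℕ} {P : Finset (S → ℕ)}

lemma prod_sum_siteWeight_le (hα : 2 ≤ α) (hq0 : ∀ z, 0 ≤ q z) (hq1 : ∀ z, q z ≤ 1)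
    (T : Finset S) (D : S → Finset ℕ) :
    ∏ z ∈ T, ∑ n ∈ D z, siteWeight α (q z) n ≤ 3 ^ Fintype.card S :=
  calc ∏ z ∈ T, ∑ n ∈ D z, siteWeight α (q z) n ≤ ∏ _z ∈ T, (3 : ℝ) :=
        prod_le_prod (fun z _ => sum_nonneg fun n _ => siteWeight_nonneg (hq0 z))
          fun z _ => sum_siteWeight_le_three hα (hq0 z) (hq1 z) (D z)
    _ ≤ 3 ^ Fintype.card S := by
        rw [prod_const]
        exact pow_le_pow_right₀ (by norm_num) (card_le_univ T)

lemma prod_sum_siteWeight_le_of_tail (hα : 2 ≤ α) (hq0 : ∀ z, 0 ≤ q z) (hq1 : ∀ z, q z ≤ 1)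
    {T : Finset S} {t : S} (ht : t ∈ T) {D : S → Finset ℕ} {C : ℝ} (hC : 1 ≤ C)
    (hD : ∀ n ∈ D t, C ≤ n) :
    ∏ z ∈ T, ∑ n ∈ D z, siteWeight α (q z) n ≤ 2 * C ^ (1 - α) * 3 ^ Fintype.card S := by
  rw [← mul_prod_erase T _ ht]
  refine mul_le_mul ?_ (prod_sum_siteWeight_le hα hq0 hq1 _ D)
    (prod_nonneg fun z _ => sum_nonneg fun n _ => siteWeight_nonneg (hq0 z)) (by positivity)
  exact (sum_le_sum fun _ _ => siteWeight_le_inv_aZR (hq0 t) (hq1 t)).trans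
    (sum_inv_aZR_le_of_le hα hC (D t) hD)

lemma sum_prod_siteWeight_le_of_three_sites (hα : 2 ≤ α) (hq0 : ∀ z, 0 ≤ q z)
    (hq1 : ∀ z, q z ≤ 1) (hP : P ⊆ configs S N) {u v t : S} (huv : u ≠ v)
    (ht : t ∈ ({u, v} : Finset S)ᶜ)
    (hu : ∀ η₁ ∈ P, ∀ η₂ ∈ P, (∀ z ∈ ({u, v} : Finset S)ᶜ, η₁ z = η₂ z) → η₁ u = η₂ u)
    {A B C : ℝ} (hA : 0 < A) (hB : 0 < B) (hC : 1 ≤ C)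
    (hAu : ∀ η ∈ P, A ≤ η u) (hBv : ∀ η ∈ P, B ≤ η v) (hCt : ∀ η ∈ P, C ≤ η t) :
    ∑ η ∈ P, ∏ z, siteWeight α (q z) (η z)
      ≤ A ^ (-α) * B ^ (-α) * (2 * C ^ (1 - α) * 3 ^ Fintype.card S) := by
  have hα0 : 0 ≤ α := by linarith
  refine (sum_prod_le_of_pinned hP huv hu (g := fun z => siteWeight α (q z))
    (fun z _ => siteWeight_nonneg (hq0 z)) (K := A ^ (-α) * B ^ (-α)) (by positivity)
    fun η hη => ?_).trans <| mul_le_mul_of_nonneg_left ?_ (by positivity)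
  · exact mul_le_mul (siteWeight_le_rpow_neg hα0 (hq0 u) (hq1 u) hA (hAu η hη))
      (siteWeight_le_rpow_neg hα0 (hq0 v) (hq1 v) hB (hBv η hη))
      (siteWeight_nonneg (hq0 v)) (by positivity)
  · refine prod_sum_siteWeight_le_of_tail hα hq0 hq1 ht hC fun n hn => ?_
    obtain ⟨η, hη, rfl⟩ := mem_image.mp hn
    exact hCt η hη

lemma sum_prod_siteWeight_le_of_two_sites (hα : 2 ≤ α) (hq0 : ∀ z, 0 ≤ q z)
    (hq1 : ∀ z, q z ≤ 1) (hP : P ⊆ configs S N) {u v : S} (huv : u ≠ v)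
    (hu : ∀ η₁ ∈ P, ∀ η₂ ∈ P, (∀ z ∈ ({u, v} : Finset S)ᶜ, η₁ z = η₂ z) → η₁ u = η₂ u)
    {θ : ℝ} (hθ : 0 ≤ θ) (hqv : q v ≤ Real.exp (-θ)) {A B : ℝ} (hA : 0 < A)
    (hAu : ∀ η ∈ P, A ≤ η u) (hBv : ∀ η ∈ P, B ≤ η v) :
    ∑ η ∈ P, ∏ z, siteWeight α (q z) (η z)
      ≤ A ^ (-α) * Real.exp (-(θ * B)) * 3 ^ Fintype.card S := by
  have hα0 : 0 ≤ α := by linarith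
  refine (sum_prod_le_of_pinned hP huv hu (g := fun z => siteWeight α (q z))
    (fun z _ => siteWeight_nonneg (hq0 z)) (K := A ^ (-α) * Real.exp (-(θ * B)))
    (by positivity) fun η hη => ?_).trans <|
      mul_le_mul_of_nonneg_left (prod_sum_siteWeight_le hα hq0 hq1 _ _) (by positivity)
  exact mul_le_mul (siteWeight_le_rpow_neg hα0 (hq0 u) (hq1 u) hA (hAu η hη))
    (siteWeight_le_exp hα0 (hq0 v) hθ hqv (hBv η hη)) (siteWeight_nonneg (hq0 v))
    (by positivity)

lemma sum_prod_siteWeight_le_of_saddle (hα : 2 ≤ α) (hq0 : ∀ z, 0 ≤ q z)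
    (hq1 : ∀ z, q z ≤ 1) (hP : P ⊆ configs S N) {x y : S} (hxy : x ≠ y)
    (hconst : ∀ η₁ ∈ P, ∀ η₂ ∈ P, η₁ x + η₁ y = η₂ x + η₂ y) {π : ℕ} (hπ : 0 < π)
    (hrest : ∀ η ∈ P, η x + η y + π ≤ N) {L : ℝ} (hL : 1 ≤ L)
    (hLx : ∀ η ∈ P, L ≤ η x) (hLy : ∀ η ∈ P, L ≤ η y) :
    ∑ η ∈ P, ∏ z, siteWeight α (q z) (η z)
      ≤ Fintype.card S * (L ^ (-α) * ((π : ℝ) / Fintype.card S) ^ (-α)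
          * (2 * L ^ (1 - α) * 3 ^ Fintype.card S)) := by
  have hs : (0 : ℝ) < Fintype.card S := by exact_mod_cast Fintype.card_pos_iff.mpr ⟨x⟩
  have hcov : ∀ η ∈ P, ∃ w ∈ univ, w ∈ ({x, y} : Finset S)ᶜ ∧ (π : ℝ) / Fintype.card S ≤ η w := by
    intro η hη
    have htot : ∑ z ∈ ({x, y} : Finset S)ᶜ, η z + (η x + η y) = N := by
      rw [← sum_pair hxy, sum_compl_add_sum, mem_configs_iff.mp (hP hη)]
    have hle : π ≤ ∑ z ∈ ({x, y} : Finset S)ᶜ, η z := by have := hrest η hη; omega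
    obtain ⟨w, hw, hwπ⟩ :=
      exists_coord_ge_div_card _ η (Nat.cast_pos.mpr hπ) (by exact_mod_cast hle)
    exact ⟨w, mem_univ w, hw, hwπ⟩
  refine (sum_le_sum_sum_filter_of_cover (fun η _ => prod_nonneg fun z _ =>
    siteWeight_nonneg (hq0 z)) hcov).trans <|
      (sum_le_card_nsmul _ _ _ fun w _ => ?_).trans (by rw [card_univ, nsmul_eq_mul])
  by_cases hw : w ∈ ({x, y} : Finset S)ᶜ
  · have hwx : w ≠ x := fun h => by simp [h] at hw
    have hwy : w ≠ y := fun h => by simp [h] at hw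
    refine sum_prod_siteWeight_le_of_three_sites hα hq0 hq1 ((filter_subset _ _).trans hP)
      (Ne.symm hwy) (t := x) (by simp [hxy, Ne.symm hwx]) ?_ (by linarith) (by positivity) hL
      (fun η hη => hLy η (mem_filter.mp hη).1) (fun η hη => (mem_filter.mp hη).2.2)
      (fun η hη => hLx η (mem_filter.mp hη).1)
    intro η₁ h₁ η₂ h₂ hagree
    have := hconst η₁ (mem_filter.mp h₁).1 η₂ (mem_filter.mp h₂).1
    have := hagree x (by simp [hxy, Ne.symm hwx])
    omega
  · rw [sum_eq_zero fun η hη => absurd (mem_filter.mp hη).2.1 hw]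
    positivity

/-- When `w ∈ S⋆`, the separation from the tube `T^{x,w}` leaves more than `π` particles
outside `{x, w}`. -/
lemma exists_valley_witness {Sstar : Finset S} {x : S} {η : S → ℕ} (hη : η ∈ configs S N)
    {L : ℝ} (hL : 0 < L) (hLx : η x + L ≤ N) {π : ℕ} (hπ : 0 < π)
    (hsep : ∀ y ∈ Sstar.erase x, η x + η y + π < N) :
    ∃ w v : S, w ≠ x ∧ L / Fintype.card S ≤ η w ∧
      (w ∉ Sstar ∨ v ∈ ({x, w} : Finset S)ᶜ ∧ (π : ℝ) / Fintype.card S ≤ η v) := by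
  have hsum := mem_configs_iff.mp hη
  have hrest : L ≤ ∑ z ∈ ({x} : Finset S)ᶜ, η z := by
    have := sum_compl_add_sum {x} η
    rw [sum_singleton, hsum] at this
    have : (N : ℝ) = ∑ z ∈ ({x} : Finset S)ᶜ, η z + η x := by exact_mod_cast this.symm
    linarith
  obtain ⟨w, hw, hLw⟩ := exists_coord_ge_div_card _ η hL hrest
  have hwx : w ≠ x := by simpa using hw
  by_cases hwS : w ∈ Sstar
  · have htot : ∑ z ∈ ({x, w} : Finset S)ᶜ, η z + (η x + η w) = N := by
      rw [← sum_pair hwx.symm, sum_compl_add_sum, hsum]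
    have := hsep w (mem_erase.mpr ⟨hwx, hwS⟩)
    obtain ⟨v, hv, hπv⟩ := exists_coord_ge_div_card _ η (Nat.cast_pos.mpr hπ)
      (by exact_mod_cast (by omega : π ≤ ∑ z ∈ ({x, w} : Finset S)ᶜ, η z))
    exact ⟨w, v, hwx, hLw, Or.inr ⟨hv, hπv⟩⟩
  · exact ⟨w, w, hwx, hLw, Or.inl hwS⟩

lemma sum_prod_siteWeight_le_of_valley_witness (hα : 2 ≤ α) (hq0 : ∀ z, 0 ≤ q z)
    (hq1 : ∀ z, q z ≤ 1) {Sstar : Finset S} {θ : ℝ} (hθ : 0 ≤ θ)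
    (hqθ : ∀ z ∉ Sstar, q z ≤ Real.exp (-θ)) (hP : P ⊆ configs S N) {x w v : S}
    (hconst : ∀ η₁ ∈ P, ∀ η₂ ∈ P, η₁ x = η₂ x) {A B C : ℝ} (hA : 0 < A) (hB : 0 < B)
    (hC : 1 ≤ C) (hAx : ∀ η ∈ P, A ≤ η x)
    (hw : ∀ η ∈ P, w ≠ x ∧ B ≤ η w ∧ (w ∉ Sstar ∨ v ∈ ({x, w} : Finset S)ᶜ ∧ C ≤ η v)) :
    ∑ η ∈ P, ∏ z, siteWeight α (q z) (η z)
      ≤ A ^ (-α) * Real.exp (-(θ * B)) * 3 ^ Fintype.card S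
        + A ^ (-α) * B ^ (-α) * (2 * C ^ (1 - α) * 3 ^ Fintype.card S) := by
  rcases P.eq_empty_or_nonempty with rfl | ⟨η₀, hη₀⟩
  · rw [sum_empty]
    positivity
  have hwx := (hw η₀ hη₀).1
  have hu : ∀ η₁ ∈ P, ∀ η₂ ∈ P, (∀ z ∈ ({x, w} : Finset S)ᶜ, η₁ z = η₂ z) → η₁ x = η₂ x :=
    fun η₁ h₁ η₂ h₂ _ => hconst η₁ h₁ η₂ h₂
  by_cases hwS : w ∈ Sstar
  · have hv := fun η hη => (hw η hη).2.2.resolve_left (not_not.mpr hwS)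
    exact le_add_of_nonneg_of_le (by positivity) <|
      sum_prod_siteWeight_le_of_three_sites hα hq0 hq1 hP hwx.symm (hv η₀ hη₀).1 hu hA hB hC
        hAx (fun η hη => (hw η hη).2.1) fun η hη => (hv η hη).2
  · exact le_add_of_le_of_nonneg (sum_prod_siteWeight_le_of_two_sites hα hq0 hq1 hP
      hwx.symm hu hθ (hqθ w hwS) hA hAx fun η hη => (hw η hη).2.1) (by positivity)

lemma sum_prod_siteWeight_le_of_valley (hα : 2 ≤ α) (hq0 : ∀ z, 0 ≤ q z)
    (hq1 : ∀ z, q z ≤ 1) {Sstar : Finset S} {θ : ℝ} (hθ : 0 ≤ θ)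
    (hqθ : ∀ z ∉ Sstar, q z ≤ Real.exp (-θ)) (hP : P ⊆ configs S N) {x : S}
    (hconst : ∀ η₁ ∈ P, ∀ η₂ ∈ P, η₁ x = η₂ x) {A L : ℝ} (hA : 0 < A) (hL : 0 < L)
    (hAx : ∀ η ∈ P, A ≤ η x) (hLx : ∀ η ∈ P, η x + L ≤ N) {π : ℕ}
    (hπ : Fintype.card S ≤ π) (hsep : ∀ η ∈ P, ∀ y ∈ Sstar.erase x, η x + η y + π < N) :
    ∑ η ∈ P, ∏ z, siteWeight α (q z) (η z)
      ≤ Fintype.card S ^ 2 * (A ^ (-α) * Real.exp (-(θ * (L / Fintype.card S)))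
          * 3 ^ Fintype.card S + A ^ (-α) * (L / Fintype.card S) ^ (-α)
          * (2 * ((π : ℝ) / Fintype.card S) ^ (1 - α) * 3 ^ Fintype.card S)) := by
  set s := Fintype.card S
  have hs : 0 < s := Fintype.card_pos_iff.mpr ⟨x⟩
  have hsR : (0 : ℝ) < s := Nat.cast_pos.mpr hs
  have hπs : 1 ≤ (π : ℝ) / s := by
    rw [le_div_iff₀ hsR, one_mul]
    exact_mod_cast hπ
  have hcov : ∀ η ∈ P, ∃ i ∈ (univ : Finset (S × S)), i.1 ≠ x ∧ L / s ≤ η i.1 ∧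
      (i.1 ∉ Sstar ∨ i.2 ∈ ({x, i.1} : Finset S)ᶜ ∧ (π : ℝ) / s ≤ η i.2) := fun η hη => by
    obtain ⟨w, v, h⟩ := exists_valley_witness (hP hη) hL (hLx η hη) (hs.trans_le hπ)
      (hsep η hη)
    exact ⟨(w, v), mem_univ _, h⟩
  refine (sum_le_sum_sum_filter_of_cover (fun η _ => prod_nonneg fun z _ =>
    siteWeight_nonneg (hq0 z)) hcov).trans <| (sum_le_card_nsmul _ _ _ fun i _ => ?_).trans
      (by rw [card_univ, Fintype.card_prod, nsmul_eq_mul, Nat.cast_mul, sq])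
  exact sum_prod_siteWeight_le_of_valley_witness hα hq0 hq1 hθ hqθ
    ((filter_subset _ _).trans hP) (fun η₁ h₁ η₂ h₂ =>
      hconst η₁ (mem_filter.mp h₁).1 η₂ (mem_filter.mp h₂).1) hA (div_pos hL hsR) hπs
    (fun η hη => hAx η (mem_filter.mp hη).1) fun η hη => (mem_filter.mp hη).2

end Estimates

section Asymptotics

variable {α : ℝ}

lemma half_le_natFloor {x : ℝ} (hx : 1 ≤ x) : x / 2 ≤ ⌊x⌋₊ := by
  have h1 : (1 : ℝ) ≤ ⌊x⌋₊ := by exact_mod_cast (Nat.one_le_floor_iff x).mpr hx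
  have h2 := Nat.lt_floor_add_one x
  linarith

lemma tendsto_natCast_rpow_atTop {e : ℝ} (he : 0 < e) :
    Tendsto (fun N : ℕ => (N : ℝ) ^ e) atTop atTop :=
  (tendsto_rpow_atTop he).comp tendsto_natCast_atTop_atTop

lemma tendsto_natCast_rpow_nhds_zero {e : ℝ} (he : e < 0) :
    Tendsto (fun N : ℕ => (N : ℝ) ^ e) atTop (𝓝 0) := by
  have := (tendsto_rpow_neg_atTop (neg_pos.mpr he)).comp tendsto_natCast_atTop_atTop
  simpa only [neg_neg, Function.comp_def] using this

lemma eventually_one_le_mul_natCast {c : ℝ} (hc : 0 < c) : ∀ᶠ N : ℕ in atTop, 1 ≤ c * N :=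
  (tendsto_natCast_atTop_atTop.const_mul_atTop hc).eventually_ge_atTop 1

lemma eventually_le_piZR (hα : 0 < α) (K : ℕ) : ∀ᶠ N in atTop, K ≤ piZR α N := by
  filter_upwards [(tendsto_natCast_rpow_atTop (by positivity : 0 < 1 / α + 1 / 2))
    |>.eventually_ge_atTop (K : ℝ)] with N hN
  exact Nat.le_floor hN

lemma eventually_piZR_add_one_le (hα : 2 < α) {ε : ℝ} (hε : 0 < ε) :
    ∀ᶠ N : ℕ in atTop, (piZR α N : ℝ) + 1 ≤ ε * N := by
  have hβ : 1 / α + 1 / 2 - 1 < 0 := by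
    have : 1 / α < 1 / 2 := one_div_lt_one_div_of_lt (by norm_num) hα
    linarith
  filter_upwards [(tendsto_natCast_rpow_nhds_zero hβ).eventually_le_const (half_pos hε),
    eventually_one_le_mul_natCast (half_pos hε), eventually_gt_atTop 0] with N h1 h2 hN
  have hN' : (0 : ℝ) < N := Nat.cast_pos.mpr hN
  have hπ : (piZR α N : ℝ) ≤ (N : ℝ) ^ (1 / α + 1 / 2) := Nat.floor_le (by positivity)
  have hsplit : (N : ℝ) ^ (1 / α + 1 / 2) = (N : ℝ) ^ (1 / α + 1 / 2 - 1) * N := by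
    rw [← Real.rpow_add_one hN'.ne']
    ring_nf
  nlinarith

lemma tendsto_rpow_mul_piZR_div_rpow (hα : 0 < α) {a b c : ℝ} (hc : 0 < c) (hb : b ≤ 0)
    (hab : a + (1 / α + 1 / 2) * b < 0) :
    Tendsto (fun N : ℕ => (N : ℝ) ^ a * ((piZR α N : ℝ) / c) ^ b) atTop (𝓝 0) := by
  have hbound : ∀ᶠ N : ℕ in atTop, (N : ℝ) ^ a * ((piZR α N : ℝ) / c) ^ b
      ≤ (2 * c) ^ (-b) * (N : ℝ) ^ (a + (1 / α + 1 / 2) * b) := by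
    filter_upwards [(tendsto_natCast_rpow_atTop (by positivity : 0 < 1 / α + 1 / 2))
      |>.eventually_ge_atTop 1, eventually_gt_atTop 0] with N hN hN0
    have hN0' : (0 : ℝ) < N := Nat.cast_pos.mpr hN0
    have hπ : (N : ℝ) ^ (1 / α + 1 / 2) / (2 * c) ≤ (piZR α N : ℝ) / c := by
      rw [← div_div]
      exact div_le_div_of_nonneg_right (half_le_natFloor hN) hc.le
    calc (N : ℝ) ^ a * ((piZR α N : ℝ) / c) ^ b
        ≤ (N : ℝ) ^ a * ((N : ℝ) ^ (1 / α + 1 / 2) / (2 * c)) ^ b :=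
          mul_le_mul_of_nonneg_left (Real.rpow_le_rpow_of_nonpos (by positivity) hπ hb)
            (by positivity)
      _ = (2 * c) ^ (-b) * (N : ℝ) ^ (a + (1 / α + 1 / 2) * b) := by
          rw [Real.div_rpow (by positivity) (by positivity), ← Real.rpow_mul hN0'.le,
            Real.rpow_add hN0', Real.rpow_neg (by positivity)]
          ring
  refine squeeze_zero' (Eventually.of_forall fun N => by positivity) hbound ?_
  simpa using (tendsto_natCast_rpow_nhds_zero hab).const_mul ((2 * c) ^ (-b))

lemma rpow_mul_mul_rpow_neg {x : ℝ} (hx : 0 < x) {c : ℝ} (hc : 0 < c) (α : ℝ) :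
    x ^ α * (c * x) ^ (-α) = c ^ (-α) := by
  rw [Real.mul_rpow hc.le hx.le, Real.rpow_neg hx.le]
  field_simp

end Asymptotics

/-- Configurations of the inner (`c = 0`) or outer (`c = 1`) boundary layer of the saddle tube
`J^{x,y}`. -/
def SaddleLayer (S : Type*) [Fintype S] (α ε : ℝ) (c N : ℕ) (x y : S) (η : S → ℕ) : Prop :=
  η ∈ configs S N ∧ η x + η y + piZR α N + c = N ∧
    (η x : ℝ) < N * (1 - 2 * ε) ∧ (η y : ℝ) < N * (1 - 2 * ε)

/-- Configurations of the inner (`c = 0`) or outer (`c = 1`) boundary layer of the valley `D^x`,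
away from the tubes. -/
def ValleyLayer (S : Type*) [Fintype S] (α ε : ℝ) (Sstar : Finset S) (c N : ℕ) (x : S)
    (η : S → ℕ) : Prop :=
  η ∈ configs S N ∧ η x + c = ⌈(N : ℝ) * (1 - 2 * ε)⌉₊ ∧
    ∀ y ∈ Sstar.erase x, η x + η y + piZR α N < N

section Layers

variable {S : Type*} [Fintype S] {α ε : ℝ} {q : S → ℝ} {c : ℕ}

lemma rpow_mul_sum_saddleLayer_le (hα : 2 < α) (hε : 0 < ε) (hq0 : ∀ z, 0 ≤ q z)
    (hq1 : ∀ z, q z ≤ 1) {x y : S} (hxy : x ≠ y) (hc : c ≤ 1) {N : ℕ} (hN : 0 < N)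
    (hπ : 1 ≤ piZR α N) (hπε : (piZR α N : ℝ) + 1 ≤ ε * N) {P : Finset (S → ℕ)}
    (hP : ∀ η ∈ P, SaddleLayer S α ε c N x y η) :
    (N : ℝ) ^ (1 + α) * ((N : ℝ) ^ α * ∑ η ∈ P, ∏ z, siteWeight α (q z) (η z))
      ≤ (Fintype.card S : ℝ) * 2 * 3 ^ Fintype.card S * ε ^ (-α) * ε ^ (1 - α)
          * ((N : ℝ) ^ (2 : ℝ) * ((piZR α N : ℝ) / Fintype.card S) ^ (-α)) := by
  set s := Fintype.card S
  have hN' : (0 : ℝ) < N := Nat.cast_pos.mpr hN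
  have hmass : ∀ η ∈ P, (η x : ℝ) + η y + piZR α N + c = N := fun η hη => by
    exact_mod_cast (hP η hη).2.1
  have hcR : (c : ℝ) ≤ 1 := by exact_mod_cast hc
  have hest := sum_prod_siteWeight_le_of_saddle (α := α) (by linarith) hq0 hq1
    (fun η hη => (hP η hη).1) hxy (fun η₁ h₁ η₂ h₂ => by
      have := (hP η₁ h₁).2.1; have := (hP η₂ h₂).2.1; omega) hπ
    (fun η hη => by have := (hP η hη).2.1; omega) (L := ε * N) (by linarith)
    (fun η hη => by linarith [hmass η hη, (hP η hη).2.2.2])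
    (fun η hη => by linarith [hmass η hη, (hP η hη).2.2.1])
  have hexp : (N : ℝ) ^ (1 + α) * (N : ℝ) ^ α * (N : ℝ) ^ (-α) * (N : ℝ) ^ (1 - α)
      = (N : ℝ) ^ (2 : ℝ) := by
    rw [← Real.rpow_add hN', ← Real.rpow_add hN', ← Real.rpow_add hN']
    ring_nf
  calc (N : ℝ) ^ (1 + α) * ((N : ℝ) ^ α * ∑ η ∈ P, ∏ z, siteWeight α (q z) (η z))
      ≤ (N : ℝ) ^ (1 + α) * ((N : ℝ) ^ α * (s * ((ε * N) ^ (-α)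
          * ((piZR α N : ℝ) / s) ^ (-α) * (2 * (ε * N) ^ (1 - α) * 3 ^ s)))) := by
        gcongr
    _ = _ := by
        rw [← hexp, Real.mul_rpow hε.le hN'.le, Real.mul_rpow hε.le hN'.le]
        ring

lemma tendsto_sum_saddleLayer (hα : 2 < α) (hε : 0 < ε) (hq0 : ∀ z, 0 ≤ q z)
    (hq1 : ∀ z, q z ≤ 1) {x y : S} (hxy : x ≠ y) (hc : c ≤ 1) (P : ℕ → Finset (S → ℕ))
    (hP : ∀ N, ∀ η ∈ P N, SaddleLayer S α ε c N x y η) :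
    Tendsto (fun N : ℕ => (N : ℝ) ^ (1 + α) *
      ((N : ℝ) ^ α * ∑ η ∈ P N, ∏ z, siteWeight α (q z) (η z))) atTop (𝓝 0) := by
  have hs : (0 : ℝ) < Fintype.card S := by exact_mod_cast Fintype.card_pos_iff.mpr ⟨x⟩
  have hrate := (tendsto_rpow_mul_piZR_div_rpow (α := α) (a := 2) (b := -α) (by linarith) hs
    (by linarith) (by field_simp; linarith)).const_mul
      ((Fintype.card S : ℝ) * 2 * 3 ^ Fintype.card S * ε ^ (-α) * ε ^ (1 - α))
  rw [mul_zero] at hrate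
  refine squeeze_zero' (Eventually.of_forall fun N => mul_nonneg (by positivity) <|
    mul_nonneg (by positivity) <| sum_nonneg fun η _ => prod_nonneg fun z _ =>
      siteWeight_nonneg (hq0 z)) ?_ hrate
  filter_upwards [eventually_piZR_add_one_le hα hε,
    eventually_le_piZR (α := α) (by linarith) 1, eventually_gt_atTop 0] with N hπε hπ hN
  exact rpow_mul_sum_saddleLayer_le hα hε hq0 hq1 hxy hc hN hπ hπε (hP N)

lemma rpow_mul_sum_valleyLayer_le (hα : 2 < α) (hε : 0 < ε) (hq0 : ∀ z, 0 ≤ q z)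
    (hq1 : ∀ z, q z ≤ 1) {Sstar : Finset S} {θ : ℝ} (hθ : 0 ≤ θ)
    (hqθ : ∀ z ∉ Sstar, q z ≤ Real.exp (-θ)) {x : S} (hc : c ≤ 1) {N : ℕ} (hN : 0 < N)
    (hhalf : 1 ≤ (1 / 2 - 2 * ε) * N) (hεN : 1 ≤ ε * N) (hπ : Fintype.card S ≤ piZR α N)
    {P : Finset (S → ℕ)} (hP : ∀ η ∈ P, ValleyLayer S α ε Sstar c N x η) :
    (N : ℝ) ^ (1 + α) * ((N : ℝ) ^ α * ∑ η ∈ P, ∏ z, siteWeight α (q z) (η z))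
      ≤ (Fintype.card S : ℝ) ^ 2 * 3 ^ Fintype.card S * 2⁻¹ ^ (-α)
          * ((N : ℝ) ^ (1 + α) * Real.exp (-(θ * (ε / Fintype.card S)) * N)
            + 2 * (ε / Fintype.card S) ^ (-α)
              * ((N : ℝ) ^ (1 : ℝ) * ((piZR α N : ℝ) / Fintype.card S) ^ (1 - α))) := by
  set s := Fintype.card S
  have hs : (0 : ℝ) < s := by exact_mod_cast Fintype.card_pos_iff.mpr ⟨x⟩
  have hN' : (0 : ℝ) < N := Nat.cast_pos.mpr hN
  have hcR : (c : ℝ) ≤ 1 := by exact_mod_cast hc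
  have hceil : ∀ η ∈ P, (η x : ℝ) + c = ⌈(N : ℝ) * (1 - 2 * ε)⌉₊ := fun η hη => by
    exact_mod_cast (hP η hη).2.1
  have hceil_le : (N : ℝ) * (1 - 2 * ε) ≤ ⌈(N : ℝ) * (1 - 2 * ε)⌉₊ := Nat.le_ceil _
  have hceil_lt : (⌈(N : ℝ) * (1 - 2 * ε)⌉₊ : ℝ) < N * (1 - 2 * ε) + 1 :=
    Nat.ceil_lt_add_one (by nlinarith)
  have hest := sum_prod_siteWeight_le_of_valley (α := α) (by linarith) hq0 hq1 hθ hqθ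
    (fun η hη => (hP η hη).1) (x := x) (fun η₁ h₁ η₂ h₂ => by
      have := (hP η₁ h₁).2.1; have := (hP η₂ h₂).2.1; omega)
    (A := 2⁻¹ * N) (L := ε * N) (by positivity) (by positivity)
    (fun η hη => by linarith [hceil η hη]) (fun η hη => by linarith [hceil η hη])
    hπ (fun η hη => (hP η hη).2.2)
  have h2 := rpow_mul_mul_rpow_neg hN' (by norm_num : (0 : ℝ) < 2⁻¹) α
  have hεs := rpow_mul_mul_rpow_neg hN' (div_pos hε hs) α
  calc (N : ℝ) ^ (1 + α) * ((N : ℝ) ^ α * ∑ η ∈ P, ∏ z, siteWeight α (q z) (η z))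
      ≤ (N : ℝ) ^ (1 + α) * ((N : ℝ) ^ α * (s ^ 2 * ((2⁻¹ * N) ^ (-α)
          * Real.exp (-(θ * (ε * N / s))) * 3 ^ s + (2⁻¹ * N) ^ (-α) * (ε * N / s) ^ (-α)
          * (2 * ((piZR α N : ℝ) / s) ^ (1 - α) * 3 ^ s)))) := by
        gcongr
    _ = ((N : ℝ) ^ α * (2⁻¹ * N) ^ (-α)) * (s ^ 2 * 3 ^ s)
          * ((N : ℝ) ^ (1 + α) * Real.exp (-(θ * (ε / s)) * N) + 2
            * ((N : ℝ) ^ α * (ε / s * N) ^ (-α))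
            * ((N : ℝ) ^ (1 : ℝ) * ((piZR α N : ℝ) / s) ^ (1 - α))) := by
        rw [mul_div_right_comm ε N s, show -(θ * (ε / s * N)) = -(θ * (ε / s)) * N by ring,
          Real.rpow_add hN' 1 α]
        ring
    _ = _ := by rw [h2, hεs]; ring

lemma tendsto_sum_valleyLayer (hα : 2 < α) (hε : 0 < ε) (hε' : ε < 1 / 4)
    (hq0 : ∀ z, 0 ≤ q z) (hq1 : ∀ z, q z ≤ 1) {Sstar : Finset S} {θ : ℝ} (hθ : 0 < θ)
    (hqθ : ∀ z ∉ Sstar, q z ≤ Real.exp (-θ)) {x : S} (hc : c ≤ 1) (P : ℕ → Finset (S → ℕ))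
    (hP : ∀ N, ∀ η ∈ P N, ValleyLayer S α ε Sstar c N x η) :
    Tendsto (fun N : ℕ => (N : ℝ) ^ (1 + α) *
      ((N : ℝ) ^ α * ∑ η ∈ P N, ∏ z, siteWeight α (q z) (η z))) atTop (𝓝 0) := by
  set s := Fintype.card S
  have hs : (0 : ℝ) < s := by exact_mod_cast Fintype.card_pos_iff.mpr ⟨x⟩
  have hexp := (tendsto_rpow_mul_exp_neg_mul_atTop_nhds_zero (1 + α) (θ * (ε / s))
    (by positivity)).comp tendsto_natCast_atTop_atTop
  have hpow := tendsto_rpow_mul_piZR_div_rpow (α := α) (a := 1) (b := 1 - α) (by linarith) hs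
    (by linarith) (by field_simp; nlinarith)
  have hrate := (hexp.add (hpow.const_mul (2 * (ε / s) ^ (-α)))).const_mul
    ((s : ℝ) ^ 2 * 3 ^ s * 2⁻¹ ^ (-α))
  simp only [mul_zero, add_zero] at hrate
  refine squeeze_zero' (Eventually.of_forall fun N => mul_nonneg (by positivity) <|
    mul_nonneg (by positivity) <| sum_nonneg fun η _ => prod_nonneg fun z _ =>
      siteWeight_nonneg (hq0 z)) ?_ hrate
  filter_upwards [eventually_one_le_mul_natCast (by linarith : (0 : ℝ) < 1 / 2 - 2 * ε),
    eventually_one_le_mul_natCast hε, eventually_le_piZR (α := α) (by linarith) s,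
    eventually_gt_atTop 0] with N hhalf hεN hπ hN
  exact rpow_mul_sum_valleyLayer_le hα hε hq0 hq1 hθ.le hqθ hc hN hhalf hεN hπ (hP N)

end Layers

section Boundary

variable {S : Type*} [Fintype S] {α ε : ℝ} {Sstar : Finset S} {N : ℕ} {η : S → ℕ}

lemma lt_of_notMem_Dwell (hη : η ∈ configs S N) {x : S} (h : η ∉ Dwell S ε N x) :
    (η x : ℝ) < N * (1 - 2 * ε) :=
  not_le.mp fun hle => h (mem_filter.mpr ⟨hη, hle⟩)

lemma lt_of_notMem_Gset (hη : η ∈ configs S N) (hG : η ∉ Gset S α ε Sstar N) {x : S}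
    (hx : x ∈ Sstar) : (η x : ℝ) < N * (1 - 2 * ε) :=
  lt_of_notMem_Dwell hη fun h => hG (mem_union_left _ (mem_biUnion.mpr ⟨x, hx, h⟩))

lemma add_add_lt_of_notMem_Ttube (hη : η ∈ configs S N) {x : S}
    (h : η ∉ (Sstar.erase x).biUnion (Ttube S α N x)) :
    ∀ y ∈ Sstar.erase x, η x + η y + piZR α N < N :=
  fun y hy => not_le.mp fun hle => h (mem_biUnion.mpr ⟨y, hy, mem_filter.mpr ⟨hη, hle⟩⟩)

lemma saddleLayer_of_mem_bdInJ {x y : S} (h : η ∈ bdInJ S α ε N x y) :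
    SaddleLayer S α ε 0 N x y η := by
  obtain ⟨hJ, hmass⟩ := mem_filter.mp h
  obtain ⟨hT, hD⟩ := mem_sdiff.mp hJ
  have hconf := (mem_filter.mp hT).1
  exact ⟨hconf, hmass, lt_of_notMem_Dwell hconf fun h => hD (mem_union_left _ h),
    lt_of_notMem_Dwell hconf fun h => hD (mem_union_right _ h)⟩

lemma saddleLayer_of_mem_bdOutJ {x y : S} (hx : x ∈ Sstar) (hy : y ∈ Sstar)
    (h : η ∈ bdOutJ S α ε Sstar N x y) : SaddleLayer S α ε 1 N x y η := by
  obtain ⟨hη, hmass⟩ := mem_filter.mp h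
  obtain ⟨hconf, hG⟩ := mem_sdiff.mp hη
  exact ⟨hconf, hmass, lt_of_notMem_Gset hconf hG hx, lt_of_notMem_Gset hconf hG hy⟩

lemma valleyLayer_of_mem_bdInD {x : S} (h : η ∈ bdInD S α ε Sstar N x) :
    ValleyLayer S α ε Sstar 0 N x η := by
  obtain ⟨hD, hT⟩ := mem_sdiff.mp h
  obtain ⟨hDx, hceil⟩ := mem_filter.mp hD
  have hconf := (mem_filter.mp hDx).1
  exact ⟨hconf, hceil, add_add_lt_of_notMem_Ttube hconf hT⟩

lemma valleyLayer_of_mem_bdOutD {x : S} (h : η ∈ bdOutD S α ε Sstar N x) :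
    ValleyLayer S α ε Sstar 1 N x η := by
  obtain ⟨hD, hT⟩ := mem_sdiff.mp h
  obtain ⟨hG, hceil⟩ := mem_filter.mp hD
  have hconf := (mem_sdiff.mp hG).1
  exact ⟨hconf, hceil, add_add_lt_of_notMem_Ttube hconf hT⟩

variable {q : S → ℝ}

lemma tendsto_sum_boundary (hα : 2 < α) (hε : 0 < ε) (hε' : ε < 1 / 4)
    (hq0 : ∀ z, 0 ≤ q z) (hq1 : ∀ z, q z ≤ 1) {θ : ℝ} (hθ : 0 < θ)
    (hqθ : ∀ z ∉ Sstar, q z ≤ Real.exp (-θ)) {c : ℕ} (hc : c ≤ 1)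
    {μ : ℕ → (S → ℕ) → ℝ} (hμ0 : ∀ N η, 0 ≤ μ N η)
    (hμ : ∀ N, 1 ≤ N → ∀ η, μ N η ≤ (N : ℝ) ^ α * ∏ z, siteWeight α (q z) (η z))
    (D : ℕ → S → Finset (S → ℕ)) (J : ℕ → S → S → Finset (S → ℕ))
    (hD : ∀ N, ∀ x ∈ Sstar, ∀ η ∈ D N x, ValleyLayer S α ε Sstar c N x η)
    (hJ : ∀ N, ∀ x ∈ Sstar, ∀ y ∈ Sstar.erase x, ∀ η ∈ J N x y, SaddleLayer S α ε c N x y η) :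
    Tendsto (fun N : ℕ => (N : ℝ) ^ (1 + α) * ∑ η ∈ Sstar.biUnion (D N) ∪
      Sstar.biUnion (fun x => (Sstar.erase x).biUnion (J N x)), μ N η) atTop (𝓝 0) := by
  have hlim : Tendsto (fun N : ℕ =>
      ∑ x ∈ Sstar, (N : ℝ) ^ (1 + α) * ((N : ℝ) ^ α * ∑ η ∈ D N x, ∏ z, siteWeight α (q z) (η z))
      + ∑ x ∈ Sstar, ∑ y ∈ Sstar.erase x,
        (N : ℝ) ^ (1 + α) * ((N : ℝ) ^ α * ∑ η ∈ J N x y, ∏ z, siteWeight α (q z) (η z)))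
      atTop (𝓝 0) := by
    have hDlim := tendsto_finsetSum Sstar fun x hx =>
      tendsto_sum_valleyLayer hα hε hε' hq0 hq1 hθ hqθ hc (fun N => D N x) (hD · x hx)
    have hJlim := tendsto_finsetSum Sstar fun x hx => tendsto_finsetSum _ fun y hy =>
      tendsto_sum_saddleLayer hα hε hq0 hq1 (Ne.symm (ne_of_mem_erase hy)) hc
        (fun N => J N x y) (hJ · x hx y hy)
    simpa using hDlim.add hJlim
  refine squeeze_zero' (Eventually.of_forall fun N =>
    mul_nonneg (by positivity) (sum_nonneg fun η _ => hμ0 N η)) ?_ hlim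
  filter_upwards [eventually_ge_atTop 1] with N hN
  have hmass : ∀ P : Finset (S → ℕ), (N : ℝ) ^ (1 + α) * ∑ η ∈ P, μ N η
      ≤ (N : ℝ) ^ (1 + α) * ((N : ℝ) ^ α * ∑ η ∈ P, ∏ z, siteWeight α (q z) (η z)) :=
    fun P => mul_le_mul_of_nonneg_left ((sum_le_sum fun η _ => hμ N hN η).trans_eq
      (mul_sum _ _ _).symm) (by positivity)
  refine (mul_le_mul_of_nonneg_left (sum_union_biUnion_le Sstar (D N) (J N) (hμ0 N))
    (by positivity)).trans ?_
  rw [mul_add, mul_sum, mul_sum]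
  exact add_le_add (sum_le_sum fun x _ => hmass _) (sum_le_sum fun x _ =>
    (mul_sum _ _ _).le.trans (sum_le_sum fun y _ => hmass _))

end Boundary

section Gibbs

variable {S : Type*} [Fintype S] {α : ℝ} {q : S → ℝ}

lemma exists_pos_forall_le_exp_neg {ι : Type*} (s : Finset ι) (f : ι → ℝ)
    (hf : ∀ i ∈ s, f i < 1) : ∃ θ > 0, ∀ i ∈ s, f i ≤ Real.exp (-θ) := by
  have hlim : Tendsto (fun θ : ℝ => Real.exp (-θ)) (𝓝[>] 0) (𝓝 1) := by
    have := ((Real.continuous_exp.comp continuous_neg).tendsto 0).mono_left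
      (nhdsWithin_le_nhds (s := Set.Ioi (0 : ℝ)))
    simpa [Function.comp_def] using this
  obtain ⟨θ, hθ, h⟩ := ((eventually_mem_nhdsWithin : ∀ᶠ θ in 𝓝[>] (0 : ℝ), θ ∈ Set.Ioi 0).and
    ((eventually_all_finset s).mpr fun i hi =>
      (hlim.eventually (lt_mem_nhds (hf i hi))).mono fun _ h => h.le)).exists
  exact ⟨θ, hθ, h⟩

lemma one_le_rpow_mul_sum_prod_siteWeight (hq0 : ∀ z, 0 ≤ q z) {x₀ : S} (hx₀ : q x₀ = 1)
    {N : ℕ} (hN : 1 ≤ N) :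
    1 ≤ (N : ℝ) ^ α * ∑ η ∈ configs S N, ∏ z, siteWeight α (q z) (η z) := by
  have hN' : (0 : ℝ) < N := by exact_mod_cast hN
  have hmem : (Pi.single x₀ N : S → ℕ) ∈ configs S N := mem_configs_iff.mpr (by simp)
  have hterm : ∏ z, siteWeight α (q z) ((Pi.single x₀ N : S → ℕ) z) = ((N : ℝ) ^ α)⁻¹ := by
    rw [prod_eq_single x₀ (fun z _ hz => by simp [hz, siteWeight, aZR])
      (by simp)]
    simp [siteWeight, hx₀, aZR, Nat.one_le_iff_ne_zero.mp hN]
  calc (1 : ℝ) = (N : ℝ) ^ α * ((N : ℝ) ^ α)⁻¹ := (mul_inv_cancel₀ (by positivity)).symm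
    _ ≤ _ := mul_le_mul_of_nonneg_left (hterm ▸ single_le_sum
        (f := fun η : S → ℕ => ∏ z, siteWeight α (q z) (η z))
        (fun η _ => prod_nonneg fun z _ => siteWeight_nonneg (hq0 z)) hmem) (by positivity)

lemma gibbs_nonneg (hq0 : ∀ z, 0 ≤ q z) {Z : ℕ → ℝ}
    (hZ : ∀ N, Z N = (N : ℝ) ^ α *
      ∑ η ∈ configs S N, (∏ x, q x ^ η x) / ∏ x, aZR α (η x)) (N : ℕ) (η : S → ℕ) :
    0 ≤ (N : ℝ) ^ α * (∏ x, q x ^ η x) / (Z N * ∏ x, aZR α (η x)) := by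
  have hprod : ∀ η : S → ℕ, 0 ≤ ∏ x, q x ^ η x := fun η =>
    prod_nonneg fun x _ => pow_nonneg (hq0 x) _
  have haZR : ∀ η : S → ℕ, 0 ≤ ∏ x, aZR α (η x) := fun η =>
    prod_nonneg fun x _ => (aZR_pos α _).le
  have hZ0 : 0 ≤ Z N := hZ N ▸ mul_nonneg (by positivity)
    (sum_nonneg fun η _ => div_nonneg (hprod η) (haZR η))
  exact div_nonneg (mul_nonneg (by positivity) (hprod η)) (mul_nonneg hZ0 (haZR η))

lemma gibbs_le_rpow_mul_prod_siteWeight (hq0 : ∀ z, 0 ≤ q z) {x₀ : S} (hx₀ : q x₀ = 1)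
    {Z : ℕ → ℝ} (hZ : ∀ N, Z N = (N : ℝ) ^ α *
      ∑ η ∈ configs S N, (∏ x, q x ^ η x) / ∏ x, aZR α (η x)) {N : ℕ} (hN : 1 ≤ N)
    (η : S → ℕ) :
    (N : ℝ) ^ α * (∏ x, q x ^ η x) / (Z N * ∏ x, aZR α (η x))
      ≤ (N : ℝ) ^ α * ∏ z, siteWeight α (q z) (η z) := by
  simp_rw [siteWeight, prod_div_distrib] at hZ ⊢
  have hZ1 : 1 ≤ Z N := by
    rw [hZ]
    simpa only [siteWeight, prod_div_distrib] using
      one_le_rpow_mul_sum_prod_siteWeight (α := α) hq0 hx₀ hN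
  rw [mul_comm (Z N), ← div_div, mul_div_assoc]
  exact div_le_self (mul_nonneg (by positivity) (div_nonneg
    (prod_nonneg fun x _ => pow_nonneg (hq0 x) _) (prod_nonneg fun x _ => (aZR_pos α _).le))) hZ1

end Gibbs

theorem stmt_13_general {S : Type*} [Fintype S] (α : ℝ) (hα : 2 < α)
    (m : S → ℝ) (hm : ∀ x, 0 < m x)
    (Mstar : ℝ) (hMstar : IsGreatest (Set.range m) Mstar)
    (Sstar : Finset S) (hSstar : Sstar = Finset.univ.filter fun x => m x = Mstar)
    (mstar : S → ℝ) (hmstar : ∀ x, mstar x = m x / Mstar)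
    (Z : ℕ → ℝ)
    (hZ : ∀ N, Z N = (N : ℝ) ^ α *
      ∑ η ∈ configs S N, (∏ x, mstar x ^ η x) / ∏ x, aZR α (η x))
    (μ : ℕ → (S → ℕ) → ℝ)
    (hμ : ∀ N η, μ N η =
      (N : ℝ) ^ α * (∏ x, mstar x ^ η x) / (Z N * ∏ x, aZR α (η x)))
    (ε : ℝ) (hε : 0 < ε) (hε' : ε < 1 / 8) :
    Tendsto (fun N : ℕ => (N : ℝ) ^ (1 + α) * ∑ η ∈ bdInG S α ε Sstar N, μ N η)
      atTop (nhds 0) ∧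
    Tendsto (fun N : ℕ => (N : ℝ) ^ (1 + α) * ∑ η ∈ bdOutG S α ε Sstar N, μ N η)
      atTop (nhds 0) := by
  obtain ⟨x₀, hx₀⟩ := hMstar.1
  have hM : 0 < Mstar := hx₀ ▸ hm x₀
  have hq0 : ∀ z, 0 ≤ mstar z := fun z => hmstar z ▸ (div_pos (hm z) hM).le
  have hq1 : ∀ z, mstar z ≤ 1 := fun z => by
    rw [hmstar, div_le_one hM]
    exact hMstar.2 ⟨z, rfl⟩
  have hqx₀ : mstar x₀ = 1 := by rw [hmstar, hx₀, div_self hM.ne']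
  obtain ⟨θ, hθ, hqθ⟩ := exists_pos_forall_le_exp_neg Sstarᶜ mstar fun z hz => by
    rw [hmstar, div_lt_one hM]
    exact (hMstar.2 ⟨z, rfl⟩).lt_of_ne fun h => by simp [hSstar, h] at hz
  have hμ0 : ∀ N η, 0 ≤ μ N η := fun N η => hμ N η ▸ gibbs_nonneg hq0 hZ N η
  have hμle : ∀ N, 1 ≤ N → ∀ η, μ N η ≤ (N : ℝ) ^ α * ∏ z, siteWeight α (mstar z) (η z) :=
    fun N hN η => hμ N η ▸ gibbs_le_rpow_mul_prod_siteWeight hq0 hqx₀ hZ hN η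
  replace hqθ : ∀ z ∉ Sstar, mstar z ≤ Real.exp (-θ) := fun z hz => hqθ z (mem_compl.mpr hz)
  exact ⟨tendsto_sum_boundary hα hε (by linarith) hq0 hq1 hθ hqθ zero_le_one hμ0 hμle
      (bdInD S α ε Sstar) (bdInJ S α ε) (fun _ _ _ _ hη => valleyLayer_of_mem_bdInD hη)
      fun _ _ _ _ _ _ hη => saddleLayer_of_mem_bdInJ hη,
    tendsto_sum_boundary hα hε (by linarith) hq0 hq1 hθ hqθ le_rfl hμ0 hμle
      (bdOutD S α ε Sstar) (bdOutJ S α ε Sstar) (fun _ _ _ _ hη => valleyLayer_of_mem_bdOutD hη)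
      fun _ _ hx _ hy _ hη => saddleLayer_of_mem_bdOutJ hx (mem_of_mem_erase hy) hη⟩

theorem stmt_13 {S : Type*} [Fintype S] (α : ℝ) (hα : 2 < α)
    (m : S → ℝ) (hm : ∀ x, 0 < m x)
    (Mstar : ℝ) (hMstar : IsGreatest (Set.range m) Mstar)
    (Sstar : Finset S) (hSstar : Sstar = Finset.univ.filter fun x => m x = Mstar)
    (hκ : 2 ≤ Sstar.card)
    (mstar : S → ℝ) (hmstar : ∀ x, mstar x = m x / Mstar)
    (Z : ℕ → ℝ)
    (hZ : ∀ N, Z N = (N : ℝ) ^ α *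
      ∑ η ∈ configs S N, (∏ x, mstar x ^ η x) / ∏ x, aZR α (η x))
    (μ : ℕ → (S → ℕ) → ℝ)
    (hμ : ∀ N η, μ N η =
      (N : ℝ) ^ α * (∏ x, mstar x ^ η x) / (Z N * ∏ x, aZR α (η x)))
    (ε : ℝ) (hε : 0 < ε) (hε' : ε < 1 / 8) :
    Tendsto (fun N : ℕ => (N : ℝ) ^ (1 + α) * ∑ η ∈ bdInG S α ε Sstar N, μ N η)
      atTop (nhds 0) ∧
    Tendsto (fun N : ℕ => (N : ℝ) ^ (1 + α) * ∑ η ∈ bdOutG S α ε Sstar N, μ N η)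
      atTop (nhds 0) :=
  stmt_13_general α hα m hm Mstar hMstar Sstar hSstar mstar hmstar Z hZ μ hμ ε hε hε'
end

section
/- The saddle tube has small mass: for every ε ∈ (0, 1/8) and all distinct x, y ∈ S⋆, there exists a constant C > 0 such that μ_N(J^{x,y}) ≤ C · N^{−(α−1)} for all N with Nε > π_N. -/
open Filter Topology Finset
open scoped Classical

lemma rpow_le_aZR {α c : ℝ} (hα : 0 ≤ α) (hc : 0 < c) {n : ℕ} (hn : c ≤ n) :
    c ^ α ≤ aZR α n := by
  have hn0 : n ≠ 0 := by rintro rfl; exact absurd hn (by simpa using hc)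
  rw [aZR, if_neg hn0]
  exact Real.rpow_le_rpow hc.le hn hα

lemma inv_aZR_le_inv_sq {α : ℝ} (hα : 2 ≤ α) {n : ℕ} (hn : n ≠ 0) :
    (aZR α n)⁻¹ ≤ ((n : ℝ) ^ 2)⁻¹ := by
  have h1 : (1 : ℝ) ≤ n := by exact_mod_cast Nat.one_le_iff_ne_zero.mpr hn
  rw [aZR, if_neg hn, ← Real.rpow_two]
  exact inv_anti₀ (by positivity) (Real.rpow_le_rpow_of_exponent_le h1 hα)

lemma sum_range_inv_aZR_le_three {α : ℝ} (hα : 2 ≤ α) (N : ℕ) :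
    ∑ n ∈ range (N + 1), (aZR α n)⁻¹ ≤ 3 := by
  rw [range_eq_Ico, sum_eq_sum_Ico_succ_bot N.succ_pos, Ico_add_one_left_eq_Ioo]
  have htail : ∑ n ∈ Ioo 0 (N + 1), (aZR α n)⁻¹ ≤ 2 := by
    calc ∑ n ∈ Ioo 0 (N + 1), (aZR α n)⁻¹
        ≤ ∑ n ∈ Ioo 0 (N + 1), ((n : ℝ) ^ 2)⁻¹ :=
          sum_le_sum fun n hn => inv_aZR_le_inv_sq hα (mem_Ioo.mp hn).1.ne'
      _ ≤ 2 / ((0 : ℕ) + 1) := sum_Ioo_inv_sq_le 0 (N + 1)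
      _ = 2 := by norm_num
  have hzero : (aZR α 0)⁻¹ = 1 := by simp [aZR]
  rw [Nat.succ_eq_add_one, hzero]
  linarith

lemma sum_configs_prod_erase_le {S : Type*} [Fintype S] (y : S) (b : S → ℕ → ℝ)
    (hb : ∀ z n, 0 ≤ b z n) (N : ℕ) :
    ∑ η ∈ configs S N, ∏ z ∈ univ.erase y, b z (η z) ≤
      ∏ z ∈ univ.erase y, ∑ n ∈ range (N + 1), b z n := by
  set φ : (S → ℕ) → S → ℕ := fun η => Function.update η y 0
  set t : S → Finset ℕ := fun z => if z = y then {0} else range (N + 1)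
  set B : S → ℕ → ℝ := fun z n => if z = y then 1 else b z n
  have hB : ∀ ξ : S → ℕ, ∏ z, B z (ξ z) = ∏ z ∈ univ.erase y, b z (ξ z) := fun ξ => by
    rw [← prod_erase (a := y) _ (by simp [B])]
    exact prod_congr rfl fun z hz => if_neg (ne_of_mem_erase hz)
  have hφ : ∀ η, ∏ z ∈ univ.erase y, b z (φ η z) = ∏ z ∈ univ.erase y, b z (η z) := fun η =>
    prod_congr rfl fun z hz => by simp only [φ, Function.update_of_ne (ne_of_mem_erase hz)]
  -- a configuration is determined by its coordinates off `y`, since they sum to `N`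
  have hinj : Set.InjOn φ (configs S N) := by
    intro η₁ h₁ η₂ h₂ h
    have hoff : ∀ z ∈ univ.erase y, η₁ z = η₂ z := fun z hz => by
      simpa [φ, Function.update_of_ne (ne_of_mem_erase hz)] using congrFun h z
    have hsum : ∀ η ∈ configs S N, η y + ∑ z ∈ univ.erase y, η z = N := fun η hη => by
      rw [add_sum_erase _ _ (mem_univ y)]; exact (mem_filter.mp hη).2
    funext z
    by_cases hzy : z = y
    · subst hzy
      have h₁' := hsum η₁ h₁
      rw [sum_congr rfl hoff] at h₁'
      exact Nat.add_right_cancel (h₁'.trans (hsum η₂ h₂).symm)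
    · exact hoff z (mem_erase.mpr ⟨hzy, mem_univ z⟩)
  have himage : (configs S N).image φ ⊆ Fintype.piFinset t := by
    simp only [subset_iff, mem_image, Fintype.mem_piFinset]
    rintro _ ⟨η, hη, rfl⟩ z
    by_cases hzy : z = y
    · subst hzy; simp [φ, t]
    · simp only [φ, t, Function.update_of_ne hzy, if_neg hzy]
      exact Fintype.mem_piFinset.mp (mem_filter.mp hη).1 z
  calc ∑ η ∈ configs S N, ∏ z ∈ univ.erase y, b z (η z)
      = ∑ ξ ∈ (configs S N).image φ, ∏ z, B z (ξ z) := by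
        rw [sum_image hinj]; simp only [hB, hφ]
    _ ≤ ∑ ξ ∈ Fintype.piFinset t, ∏ z, B z (ξ z) :=
        sum_le_sum_of_subset_of_nonneg himage fun ξ _ _ =>
          prod_nonneg fun z _ => by by_cases hzy : z = y <;> simp [B, hzy, hb]
    _ = ∏ z, ∑ n ∈ t z, B z n := (prod_univ_sum t B).symm
    _ = ∏ z ∈ univ.erase y, ∑ n ∈ range (N + 1), b z n := by
        rw [← prod_erase (a := y) _ (by simp [B, t])]
        exact prod_congr rfl fun z hz => by simp [B, t, ne_of_mem_erase hz]

lemma lower_bounds_of_mem_Jtube {S : Type*} [Fintype S] {α ε : ℝ} {N : ℕ} {x y : S}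
    {η : S → ℕ} (hη : η ∈ Jtube S α ε N x y) (hN : (piZR α N : ℝ) ≤ ε * N) :
    η ∈ configs S N ∧ ε * N ≤ η x ∧ ε * N ≤ η y := by
  rw [Jtube, Finset.mem_sdiff, mem_union, Ttube, mem_filter] at hη
  obtain ⟨⟨hcfg, htube⟩, hD⟩ := hη
  simp only [Dwell, mem_filter, hcfg, true_and, not_or, not_le] at hD
  have htube' : (N : ℝ) ≤ η x + η y + piZR α N := by exact_mod_cast htube
  exact ⟨hcfg, by linarith, by linarith⟩

lemma inv_prod_aZR_le {S : Type*} [Fintype S] {α c : ℝ} (hα : 0 ≤ α) (hc : 0 < c)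
    {x y : S} (hxy : x ≠ y) {η : S → ℕ} (hx : c ≤ η x) (hy : c ≤ η y) :
    (∏ z, aZR α (η z))⁻¹ ≤
      ((c ^ α) ^ 2)⁻¹ * ∏ z ∈ univ.erase y, if z = x then 1 else (aZR α (η z))⁻¹ := by
  have hx' : x ∈ univ.erase y := mem_erase.mpr ⟨hxy, mem_univ x⟩
  have hsplit : ∏ z, aZR α (η z) =
      aZR α (η x) * aZR α (η y) * ∏ z ∈ (univ.erase y).erase x, aZR α (η z) := by
    rw [← mul_prod_erase _ _ (mem_univ y), ← mul_prod_erase _ _ hx']; ring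
  have hrest : ∏ z ∈ univ.erase y, (if z = x then 1 else (aZR α (η z))⁻¹) =
      (∏ z ∈ (univ.erase y).erase x, aZR α (η z))⁻¹ := by
    rw [← mul_prod_erase _ _ hx', if_pos rfl, one_mul, ← prod_inv_distrib]
    exact prod_congr rfl fun z hz => if_neg (ne_of_mem_erase hz)
  have hxy_le : (c ^ α) ^ 2 ≤ aZR α (η x) * aZR α (η y) := by
    rw [sq]
    exact mul_le_mul (rpow_le_aZR hα hc hx) (rpow_le_aZR hα hc hy) (by positivity)
      (aZR_pos α _).le
  have hprod_pos : 0 < ∏ z ∈ (univ.erase y).erase x, aZR α (η z) :=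
    prod_pos fun z _ => aZR_pos α _
  rw [hsplit, hrest, ← mul_inv]
  exact inv_anti₀ (by positivity) (mul_le_mul_of_nonneg_right hxy_le hprod_pos.le)

lemma prod_erase_sum_range_le {S : Type*} [Fintype S] {α : ℝ} (hα : 2 ≤ α) {x y : S}
    (hxy : x ≠ y) (N : ℕ) :
    ∏ z ∈ univ.erase y, ∑ n ∈ range (N + 1), (if z = x then 1 else (aZR α n)⁻¹) ≤
      (N + 1) * 3 ^ Fintype.card S := by
  rw [← mul_prod_erase _ _ (mem_erase.mpr ⟨hxy, mem_univ x⟩)]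
  simp only [↓reduceIte, sum_const, card_range, nsmul_eq_mul, mul_one, Nat.cast_add,
    Nat.cast_one]
  gcongr
  calc ∏ z ∈ (univ.erase y).erase x, ∑ n ∈ range (N + 1), (if z = x then 1 else (aZR α n)⁻¹)
      ≤ ∏ _z ∈ (univ.erase y).erase x, (3 : ℝ) :=
        prod_le_prod (fun z _ => sum_nonneg fun n _ => by split_ifs <;> simp [(aZR_pos α n).le])
          fun z hz => by simpa [if_neg (ne_of_mem_erase hz)] using sum_range_inv_aZR_le_three hα N
    _ ≤ 3 ^ Fintype.card S := by
        rw [prod_const]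
        exact pow_le_pow_right₀ (by norm_num)
          ((card_erase_le.trans card_erase_le).trans card_univ.le)

lemma sum_Jtube_inv_prod_aZR_le {S : Type*} [Fintype S] {α ε : ℝ} (hα : 2 ≤ α) {N : ℕ}
    (hN : (piZR α N : ℝ) < ε * N) {x y : S} (hxy : x ≠ y) :
    ∑ η ∈ Jtube S α ε N x y, (∏ z, aZR α (η z))⁻¹ ≤
      (((ε * N) ^ α) ^ 2)⁻¹ * ((N + 1) * 3 ^ Fintype.card S) := by
  set b : S → ℕ → ℝ := fun z n => if z = x then 1 else (aZR α n)⁻¹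
  have hb : ∀ z n, 0 ≤ b z n := fun z n => by
    simp only [b]; split_ifs <;> simp [(aZR_pos α n).le]
  have hεN : 0 < ε * N := (Nat.cast_nonneg _).trans_lt hN
  have hJ : Jtube S α ε N x y ⊆ configs S N := fun η hη => (lower_bounds_of_mem_Jtube hη hN.le).1
  calc ∑ η ∈ Jtube S α ε N x y, (∏ z, aZR α (η z))⁻¹
      ≤ ∑ η ∈ Jtube S α ε N x y, (((ε * N) ^ α) ^ 2)⁻¹ * ∏ z ∈ univ.erase y, b z (η z) :=
        sum_le_sum fun η hη => by
          obtain ⟨-, hx, hy⟩ := lower_bounds_of_mem_Jtube hη hN.le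
          exact inv_prod_aZR_le (by linarith) hεN hxy hx hy
    _ = (((ε * N) ^ α) ^ 2)⁻¹ * ∑ η ∈ Jtube S α ε N x y, ∏ z ∈ univ.erase y, b z (η z) :=
        (mul_sum _ _ _).symm
    _ ≤ (((ε * N) ^ α) ^ 2)⁻¹ * ∑ η ∈ configs S N, ∏ z ∈ univ.erase y, b z (η z) :=
        mul_le_mul_of_nonneg_left (sum_le_sum_of_subset_of_nonneg hJ fun η _ _ =>
          prod_nonneg fun z _ => hb z _) (by positivity)
    _ ≤ (((ε * N) ^ α) ^ 2)⁻¹ * ∏ z ∈ univ.erase y, ∑ n ∈ range (N + 1), b z n := by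
        gcongr
        exact sum_configs_prod_erase_le y b hb N
    _ ≤ (((ε * N) ^ α) ^ 2)⁻¹ * ((N + 1) * 3 ^ Fintype.card S) := by
        gcongr
        exact prod_erase_sum_range_le hα hxy N

lemma one_le_rpow_mul_sum_configs {S : Type*} [Fintype S] (α : ℝ) {w : S → ℝ}
    (hw : ∀ z, 0 ≤ w z) {x : S} (hx : w x = 1) {N : ℕ} (hN : 0 < N) :
    1 ≤ (N : ℝ) ^ α * ∑ η ∈ configs S N, (∏ z, w z ^ η z) / ∏ z, aZR α (η z) := by
  have hmem : Pi.single x N ∈ configs S N := by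
    simp [configs, Fintype.mem_piFinset, Pi.single_apply, apply_ite]
  have hw1 : ∏ z, w z ^ (Pi.single x N : S → ℕ) z = 1 :=
    prod_eq_one fun z _ => by by_cases hz : z = x <;> simp [hz, hx]
  have ha : ∏ z, aZR α ((Pi.single x N : S → ℕ) z) = (N : ℝ) ^ α := by
    rw [prod_eq_single x (fun z _ hz => by simp [hz, aZR]) (by simp)]
    simp [aZR, hN.ne']
  have hNα : 0 < (N : ℝ) ^ α := by positivity
  calc (1 : ℝ) = (N : ℝ) ^ α * ((∏ z, w z ^ (Pi.single x N : S → ℕ) z) /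
        ∏ z, aZR α ((Pi.single x N : S → ℕ) z)) := by
        rw [hw1, ha, mul_one_div_cancel hNα.ne']
    _ ≤ _ := by
        gcongr
        exact single_le_sum (f := fun η : S → ℕ => (∏ z, w z ^ η z) / ∏ z, aZR α (η z))
          (fun η _ => div_nonneg (prod_nonneg fun z _ => pow_nonneg (hw z) _)
            (prod_nonneg fun z _ => (aZR_pos α _).le)) hmem

lemma rpow_mul_inv_rpow_mul_le {α ε K : ℝ} (hε : 0 < ε) (hK : 0 ≤ K) {N : ℕ} (hN : 0 < N) :
    (N : ℝ) ^ α * ((((ε * N) ^ α) ^ 2)⁻¹ * ((N + 1) * K)) ≤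
      2 * K * ((ε ^ α) ^ 2)⁻¹ * (N : ℝ) ^ (-(α - 1)) := by
  have hN' : (1 : ℝ) ≤ N := by exact_mod_cast hN
  rw [Real.mul_rpow hε.le (by positivity), neg_sub, Real.rpow_sub (by positivity),
    Real.rpow_one]
  calc (N : ℝ) ^ α * (((ε ^ α * (N : ℝ) ^ α) ^ 2)⁻¹ * ((N + 1) * K))
      = (N + 1) * (K * ((ε ^ α) ^ 2)⁻¹ / (N : ℝ) ^ α) := by field_simp
    _ ≤ (2 * N) * (K * ((ε ^ α) ^ 2)⁻¹ / (N : ℝ) ^ α) := by gcongr; linarith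
    _ = 2 * K * ((ε ^ α) ^ 2)⁻¹ * ((N : ℝ) / (N : ℝ) ^ α) := by ring

theorem stmt_14_general {S : Type*} [Fintype S] (α : ℝ) (hα : 2 < α)
    (m : S → ℝ) (hm : ∀ x, 0 < m x)
    (Mstar : ℝ) (hMstar : IsGreatest (Set.range m) Mstar)
    (Sstar : Finset S) (hSstar : Sstar = Finset.univ.filter fun x => m x = Mstar)
    (mstar : S → ℝ) (hmstar : ∀ x, mstar x = m x / Mstar)
    (Z : ℕ → ℝ)
    (hZ : ∀ N, Z N = (N : ℝ) ^ α *
      ∑ η ∈ configs S N, (∏ x, mstar x ^ η x) / ∏ x, aZR α (η x))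
    (μ : ℕ → (S → ℕ) → ℝ)
    (hμ : ∀ N η, μ N η =
      (N : ℝ) ^ α * (∏ x, mstar x ^ η x) / (Z N * ∏ x, aZR α (η x)))
    (ε : ℝ) (hε : 0 < ε)
    (x y : S) (hx : x ∈ Sstar) (hxy : x ≠ y) :
    ∃ C : ℝ, 0 < C ∧ ∀ N : ℕ, (piZR α N : ℝ) < ε * N →
      ∑ η ∈ Jtube S α ε N x y, μ N η ≤ C * (N : ℝ) ^ (-(α - 1)) := by
  obtain ⟨⟨x₀, hx₀⟩, hmax⟩ := hMstar
  have hM : 0 < Mstar := hx₀ ▸ hm x₀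
  have hmstar_nonneg : ∀ z, 0 ≤ mstar z := fun z => hmstar z ▸ div_nonneg (hm z).le hM.le
  have hmstar_le : ∀ z, mstar z ≤ 1 := fun z => by
    rw [hmstar, div_le_one hM]; exact hmax ⟨z, rfl⟩
  have hmstar_x : mstar x = 1 := by
    rw [hSstar, mem_filter] at hx
    rw [hmstar, hx.2, div_self hM.ne']
  refine ⟨2 * 3 ^ Fintype.card S * ((ε ^ α) ^ 2)⁻¹, by positivity, fun N hN => ?_⟩
  have hN0 : 0 < N := Nat.pos_of_ne_zero fun h => by
    subst h; simpa using (Nat.cast_nonneg _).trans_lt hN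
  have hZ1 : 1 ≤ Z N := hZ N ▸ one_le_rpow_mul_sum_configs α hmstar_nonneg hmstar_x hN0
  have hμ_le : ∀ η, μ N η ≤ (N : ℝ) ^ α * (∏ z, aZR α (η z))⁻¹ := fun η => by
    have hA : 0 < ∏ z, aZR α (η z) := prod_pos fun z _ => aZR_pos α _
    have hP : ∏ z, mstar z ^ η z ≤ 1 :=
      prod_le_one (fun z _ => pow_nonneg (hmstar_nonneg z) _)
        fun z _ => pow_le_one₀ (hmstar_nonneg z) (hmstar_le z)
    rw [hμ, ← div_eq_mul_inv]
    exact div_le_div₀ (by positivity) (mul_le_of_le_one_right (by positivity) hP) hA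
      (le_mul_of_one_le_left hA.le hZ1)
  calc ∑ η ∈ Jtube S α ε N x y, μ N η
      ≤ (N : ℝ) ^ α * ∑ η ∈ Jtube S α ε N x y, (∏ z, aZR α (η z))⁻¹ := by
        rw [mul_sum]; exact sum_le_sum fun η _ => hμ_le η
    _ ≤ (N : ℝ) ^ α * ((((ε * N) ^ α) ^ 2)⁻¹ * ((N + 1) * 3 ^ Fintype.card S)) := by
        gcongr; exact sum_Jtube_inv_prod_aZR_le hα.le hN hxy
    _ ≤ _ := rpow_mul_inv_rpow_mul_le hε (by positivity) hN0

theorem stmt_14 {S : Type*} [Fintype S] (α : ℝ) (hα : 2 < α)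
    (m : S → ℝ) (hm : ∀ x, 0 < m x)
    (Mstar : ℝ) (hMstar : IsGreatest (Set.range m) Mstar)
    (Sstar : Finset S) (hSstar : Sstar = Finset.univ.filter fun x => m x = Mstar)
    (hκ : 2 ≤ Sstar.card)
    (mstar : S → ℝ) (hmstar : ∀ x, mstar x = m x / Mstar)
    (Z : ℕ → ℝ)
    (hZ : ∀ N, Z N = (N : ℝ) ^ α *
      ∑ η ∈ configs S N, (∏ x, mstar x ^ η x) / ∏ x, aZR α (η x))
    (μ : ℕ → (S → ℕ) → ℝ)
    (hμ : ∀ N η, μ N η =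
      (N : ℝ) ^ α * (∏ x, mstar x ^ η x) / (Z N * ∏ x, aZR α (η x)))
    (ε : ℝ) (hε : 0 < ε) (hε' : ε < 1 / 8)
    (x y : S) (hx : x ∈ Sstar) (hy : y ∈ Sstar) (hxy : x ≠ y) :
    ∃ C : ℝ, 0 < C ∧ ∀ N : ℕ, (piZR α N : ℝ) < ε * N →
      ∑ η ∈ Jtube S α ε N x y, μ N η ≤ C * (N : ℝ) ^ (-(α - 1)) :=
  stmt_14_general α hα m hm Mstar hMstar Sstar hSstar mstar hmstar Z hZ μ hμ ε hε x y hx hxy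
end

section
/- Comparison of the smoothed profile with the ideal profile: let ε ∈ (0, 1/25) and let γ : ℝ → [0,1] be a smooth nondecreasing function satisfying: γ(t) = 0 for t ≤ 3ε, γ(t) = (t − 3ε)/(1 − 6ε) for 5ε ≤ t ≤ 1 − 5ε, γ(t) = 1 for t ≥ 1 − 3ε, γ(1 − t) = 1 − γ(t) for all t, γ′(t) ≤ 1 + ε^{1/2} on [0,1], γ(t)/t ≤ 1 + ε^{1/2} on (0,1], and γ(t)/t ≥ 1 − 4ε^{1/2} on [ε^{1/2}, 1]. Then for all t ∈ [0,1]: U(γ(t)) ≤ (1 + ε^{1/2})^{2α} · U(t) and H′(t) ≤ (1 + ε^{1/2})^{2α+1} · U(t); moreover, for all t ∈ [ε^{1/2}, 1 − ε^{1/2}]: H′(t) ≥ (1 − 4ε^{1/2})^{2α} · U(t). -/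
open Set

theorem stmt_16 (α : ℝ) (hα : 2 < α)
    (ε : ℝ) (hε : 0 < ε) (hε' : ε < 1 / 25)
    (γ : ℝ → ℝ) (hsmooth : ContDiff ℝ (⊤ : ℕ∞) γ) (hmono : Monotone γ)
    (hrange : ∀ t, γ t ∈ Icc (0 : ℝ) 1)
    (h0 : ∀ t, t ≤ 3 * ε → γ t = 0)
    (hlin : ∀ t ∈ Icc (5 * ε) (1 - 5 * ε), γ t = (t - 3 * ε) / (1 - 6 * ε))
    (h1 : ∀ t, 1 - 3 * ε ≤ t → γ t = 1)
    (hsym : ∀ t, γ (1 - t) = 1 - γ t)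
    (hderiv : ∀ t ∈ Icc (0 : ℝ) 1, deriv γ t ≤ 1 + Real.sqrt ε)
    (hub : ∀ t ∈ Ioc (0 : ℝ) 1, γ t / t ≤ 1 + Real.sqrt ε)
    (hlb : ∀ t ∈ Icc (Real.sqrt ε) 1, 1 - 4 * Real.sqrt ε ≤ γ t / t)
    (Iα : ℝ) (hIα : Iα = ∫ u in (0:ℝ)..1, u ^ α * (1 - u) ^ α)
    (U : ℝ → ℝ) (hU : ∀ t, U t = t ^ α * (1 - t) ^ α / Iα)
    (V : ℝ → ℝ) (hV : ∀ t, V t = (∫ s in (0:ℝ)..t, s ^ α * (1 - s) ^ α) / Iα)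
    (H : ℝ → ℝ) (hH : ∀ t, H t = V (γ t)) :
    (∀ t ∈ Icc (0 : ℝ) 1,
      U (γ t) ≤ (1 + Real.sqrt ε) ^ (2 * α) * U t ∧
      deriv H t ≤ (1 + Real.sqrt ε) ^ (2 * α + 1) * U t) ∧
    (∀ t ∈ Icc (Real.sqrt ε) (1 - Real.sqrt ε),
      (1 - 4 * Real.sqrt ε) ^ (2 * α) * U t ≤ deriv H t) := by
  set s := Real.sqrt ε with hsdef
  have hαpos : (0:ℝ) < α := by linarith
  have hspos : 0 < s := Real.sqrt_pos.mpr hε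
  have hs2 : s ^ 2 = ε := Real.sq_sqrt hε.le
  have hs5 : s < 1 / 5 := by
    nlinarith [hs2, hspos]
  -- continuity of the integrand
  set f : ℝ → ℝ := fun u => u ^ α * (1 - u) ^ α with hfdef
  have hrpow : Continuous fun u : ℝ => u ^ α := by
    rw [continuous_iff_continuousAt]
    intro x
    exact Real.continuousAt_rpow_const x α (Or.inr hαpos.le)
  have hcont : Continuous f := by
    apply hrpow.mul
    exact hrpow.comp (continuous_const.sub continuous_id)
  -- positivity of Iα
  have hIαpos : 0 < Iα := by
    rw [hIα]
    apply intervalIntegral.intervalIntegral_pos_of_pos_on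
      (hcont.intervalIntegrable 0 1)
    · intro x hx
      have h1x : 0 < 1 - x := by linarith [hx.2]
      exact mul_pos (Real.rpow_pos_of_pos hx.1 α) (Real.rpow_pos_of_pos h1x α)
    · norm_num
  have hUnn : ∀ t ∈ Icc (0:ℝ) 1, 0 ≤ U t := by
    intro t ht
    rw [hU]
    have := Real.rpow_nonneg ht.1 α
    have := Real.rpow_nonneg (by linarith [ht.2] : (0:ℝ) ≤ 1 - t) α
    positivity
  -- γ t ≤ (1+s) t for t ∈ [0,1]
  have hA : ∀ t ∈ Icc (0:ℝ) 1, γ t ≤ (1 + s) * t := by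
    intro t ht
    rcases eq_or_lt_of_le ht.1 with h | h
    · rw [← h, h0 0 (by linarith)]; simp
    · have := hub t ⟨h, ht.2⟩
      rw [div_le_iff₀ h] at this
      linarith [this]
  have hB : ∀ t ∈ Icc (0:ℝ) 1, 1 - γ t ≤ (1 + s) * (1 - t) := by
    intro t ht
    have h1t : (1 - t) ∈ Icc (0:ℝ) 1 := ⟨by linarith [ht.2], by linarith [ht.1]⟩
    have := hA (1 - t) h1t
    rw [hsym t] at this
    exact this
  have hsplit2α : ∀ c : ℝ, 0 < c → c ^ (2 * α) = c ^ α * c ^ α := by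
    intro c hc
    rw [show 2 * α = α + α by ring, Real.rpow_add hc]
  -- key upper bound on U(γ t)
  have hUpper : ∀ t ∈ Icc (0:ℝ) 1, U (γ t) ≤ (1 + s) ^ (2 * α) * U t := by
    intro t ht
    have hγt := hrange t
    have h1 : (γ t) ^ α ≤ (1 + s) ^ α * t ^ α := by
      rw [← Real.mul_rpow (by linarith) ht.1]
      exact Real.rpow_le_rpow hγt.1 (hA t ht) hαpos.le
    have h2 : (1 - γ t) ^ α ≤ (1 + s) ^ α * (1 - t) ^ α := by
      rw [← Real.mul_rpow (by linarith) (by linarith [ht.2])]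
      exact Real.rpow_le_rpow (by linarith [hγt.2]) (hB t ht) hαpos.le
    rw [hU, hU, hsplit2α _ (by linarith), ← mul_div_assoc]
    apply (div_le_div_iff_of_pos_right hIαpos).mpr
    calc (γ t) ^ α * (1 - γ t) ^ α
        ≤ ((1 + s) ^ α * t ^ α) * ((1 + s) ^ α * (1 - t) ^ α) := by
          exact mul_le_mul h1 h2 (Real.rpow_nonneg (by linarith [hγt.2]) α)
            (mul_nonneg (Real.rpow_nonneg (by linarith) α) (Real.rpow_nonneg ht.1 α))
      _ = (1 + s) ^ α * (1 + s) ^ α * (t ^ α * (1 - t) ^ α) := by ring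
  -- derivative of H
  have hγd : ∀ t : ℝ, HasDerivAt γ (deriv γ t) t :=
    fun t => (hsmooth.differentiable (by simp) t).hasDerivAt
  have hFd : ∀ x : ℝ, HasDerivAt (fun y => ∫ u in (0:ℝ)..y, f u) (f x) x := by
    intro x
    exact intervalIntegral.integral_hasDerivAt_right (hcont.intervalIntegrable 0 x)
      (hcont.stronglyMeasurableAtFilter _ _) hcont.continuousAt
  have hHd : ∀ t : ℝ, HasDerivAt H (deriv γ t * U (γ t)) t := by
    intro t
    have hcomp : HasDerivAt (fun x => (∫ u in (0:ℝ)..γ x, f u) / Iα)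
        (f (γ t) * deriv γ t / Iα) t := (((hFd (γ t)).comp t (hγd t))).div_const Iα
    have hHe : H = fun x => (∫ u in (0:ℝ)..γ x, f u) / Iα := by
      funext x; rw [hH, hV]
    rw [hHe]
    convert hcomp using 1
    rw [hU]; ring
  have hderivH : ∀ t : ℝ, deriv H t = deriv γ t * U (γ t) := fun t => (hHd t).deriv
  constructor
  · intro t ht
    refine ⟨hUpper t ht, ?_⟩
    have hUγ : 0 ≤ U (γ t) := hUnn (γ t) (hrange t)
    have step1 : deriv H t ≤ (1 + s) * U (γ t) := by
      rw [hderivH t]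
      exact mul_le_mul_of_nonneg_right (hderiv t ht) hUγ
    have step2 : (1 + s) * U (γ t) ≤ (1 + s) * ((1 + s) ^ (2 * α) * U t) :=
      mul_le_mul_of_nonneg_left (hUpper t ht) (by linarith)
    have heq : (1 + s) ^ (2 * α + 1) * U t = (1 + s) * ((1 + s) ^ (2 * α) * U t) := by
      rw [Real.rpow_add (by linarith), Real.rpow_one]; ring
    rw [heq]
    exact step1.trans step2
  · intro t ht
    have h4s : 0 < 1 - 4 * s := by linarith
    have h5εs : 5 * ε < s := by nlinarith [hs2]
    have ht01 : t ∈ Icc (0:ℝ) 1 := ⟨by linarith [ht.1], by linarith [ht.2]⟩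
    have htpos : 0 < t := lt_of_lt_of_le hspos ht.1
    have h6ε : 0 < 1 - 6 * ε := by linarith
    -- deriv γ t = (1 - 6ε)⁻¹
    have hgloc : γ =ᶠ[nhds t] fun x => (x - 3 * ε) / (1 - 6 * ε) := by
      filter_upwards [Ioo_mem_nhds (by linarith [ht.1] : 5 * ε < t)
        (by linarith [ht.2] : t < 1 - 5 * ε)] with x hx
      exact hlin x ⟨hx.1.le, hx.2.le⟩
    have hdγ : deriv γ t = (1 - 6 * ε)⁻¹ := by
      rw [hgloc.deriv_eq]
      have : HasDerivAt (fun x : ℝ => (x - 3 * ε) / (1 - 6 * ε)) (1 / (1 - 6 * ε)) t :=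
        ((hasDerivAt_id t).sub_const (3 * ε)).div_const _
      rw [this.deriv, one_div]
    -- lower bound on U (γ t)
    have hγt := hrange t
    have hγlb : (1 - 4 * s) * t ≤ γ t := by
      have := hlb t ⟨ht.1, by linarith [ht.2]⟩
      rw [le_div_iff₀ htpos] at this
      linarith [this]
    have hγub : (1 - 4 * s) * (1 - t) ≤ 1 - γ t := by
      have h1t : (1 - t) ∈ Icc s 1 := ⟨by linarith [ht.2], by linarith [ht.1]⟩
      have := hlb (1 - t) h1t
      rw [le_div_iff₀ (by linarith [ht.2] : (0:ℝ) < 1 - t)] at this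
      rw [hsym t] at this
      linarith [this]
    have hUlow : (1 - 4 * s) ^ (2 * α) * U t ≤ U (γ t) := by
      have h1 : (1 - 4 * s) ^ α * t ^ α ≤ (γ t) ^ α := by
        rw [← Real.mul_rpow h4s.le ht01.1]
        exact Real.rpow_le_rpow (by positivity) hγlb hαpos.le
      have h2 : (1 - 4 * s) ^ α * (1 - t) ^ α ≤ (1 - γ t) ^ α := by
        rw [← Real.mul_rpow h4s.le (by linarith [ht01.2])]
        exact Real.rpow_le_rpow (by nlinarith [ht01.2]) hγub hαpos.le
      rw [hU, hU, hsplit2α _ h4s, ← mul_div_assoc]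
      apply (div_le_div_iff_of_pos_right hIαpos).mpr
      calc (1 - 4 * s) ^ α * (1 - 4 * s) ^ α * (t ^ α * (1 - t) ^ α)
          = ((1 - 4 * s) ^ α * t ^ α) * ((1 - 4 * s) ^ α * (1 - t) ^ α) := by ring
        _ ≤ (γ t) ^ α * (1 - γ t) ^ α := by
            exact mul_le_mul h1 h2
              (mul_nonneg (Real.rpow_nonneg h4s.le α) (Real.rpow_nonneg (by linarith [ht01.2]) α))
              (Real.rpow_nonneg hγt.1 α)
    have hUγ : 0 ≤ U (γ t) := hUnn (γ t) hγt
    have hinv : 1 ≤ (1 - 6 * ε)⁻¹ := by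
      rw [le_inv_comm₀ one_pos h6ε]
      linarith
    rw [hderivH t, hdγ]
    calc (1 - 4 * s) ^ (2 * α) * U t ≤ U (γ t) := hUlow
      _ = 1 * U (γ t) := by ring
      _ ≤ (1 - 6 * ε)⁻¹ * U (γ t) := mul_le_mul_of_nonneg_right hinv hUγ
end

section
/- Cancellation identity for weighted path sums under an invariant measure (the identity underlying the divergence-free property of the corrected flow): let z₁, …, z_κ be an enumeration of S and let Q₁, …, Q_{κ−1} be arbitrary real numbers. For 1 ≤ i ≤ κ set B(i) = Σ_{j : j > i} r(z_i, z_j) · Σ_{u=i}^{j−1} Q_u − Σ_{j : j < i} r(z_i, z_j) · Σ_{u=j}^{i−1} Q_u. Then Σ_{i=1}^{κ} m(z_i) · B(i) = 0. -/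
/-!
Write `P k = Q 0 + ⋯ + Q (k-1)`. Both branches of the path sum from `zᵢ` to `zⱼ` equal
`P j - P i`, so `∑ᵢ m(zᵢ) B(i) = ∑ᵢ ∑ⱼ m(zᵢ) r(zᵢ,zⱼ) (P j - P i)`. Summing the `P j` part over `i`
first and the `P i` part over `j` first, the invariance of `m` makes the two totals agree.
-/

open Finset

lemma sum_sum_mul_sub_eq_zero {α R : Type*} [Fintype α] [CommRing R] (g : α → α → R)
    (hg : ∀ i, ∑ j, g i j = ∑ j, g j i) (φ : α → R) :
    ∑ i, ∑ j, g i j * (φ j - φ i) = 0 := by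
  have hin : ∑ i, ∑ j, g i j * φ j = ∑ j, (∑ i, g i j) * φ j := by
    rw [sum_comm]; simp only [sum_mul]
  have hout : ∑ i, ∑ j, g i j * φ i = ∑ i, (∑ j, g j i) * φ i := by
    simp only [← hg, sum_mul]
  simp only [mul_sub, sum_sub_distrib, hin, hout, sub_self]

lemma balanced_comp_of_bijective {α β R : Type*} [Fintype α] [Fintype β] [AddCommMonoid R]
    (g : β → β → R) (hg : ∀ x, ∑ y, g x y = ∑ y, g y x) {e : α → β}
    (he : Function.Bijective e) (i : α) :
    ∑ j, g (e i) (e j) = ∑ j, g (e j) (e i) := by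
  rw [Fintype.sum_bijective e he _ (g (e i)) fun _ => rfl,
    Fintype.sum_bijective e he _ (g · (e i)) fun _ => rfl]
  exact hg (e i)

lemma ite_sum_Ico_sub_ite_sum_Ico {R : Type*} [AddCommGroup R] (Q : ℕ → R) (i j : ℕ) :
    ((if i < j then ∑ u ∈ Ico i j, Q u else 0) - if j < i then ∑ u ∈ Ico j i, Q u else 0) =
      ∑ u ∈ range j, Q u - ∑ u ∈ range i, Q u := by
  rcases lt_trichotomy i j with h | rfl | h
  · simp [h, h.not_gt, sum_Ico_eq_sub _ h.le]
  · simp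
  · simp [h, h.not_gt, sum_Ico_eq_sub _ h.le]

theorem stmt_19_general {S : Type*} [Fintype S]
    (r : S → S → ℝ)
    (m : S → ℝ)
    (hinv : ∀ x, ∑ y, m x * r x y = ∑ y, m y * r y x)
    (κ : ℕ)
    (z : Fin κ → S) (hz : Function.Bijective z)
    (Q : ℕ → ℝ)
    (B : Fin κ → ℝ)
    (hB : ∀ i, B i =
      (∑ j : Fin κ, if i < j then
        r (z i) (z j) * ∑ u ∈ Finset.Ico (i : ℕ) (j : ℕ), Q u else 0) -
      (∑ j : Fin κ, if j < i then
        r (z i) (z j) * ∑ u ∈ Finset.Ico (j : ℕ) (i : ℕ), Q u else 0)) :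
    ∑ i, m (z i) * B i = 0 := by
  set P : Fin κ → ℝ := fun k => ∑ u ∈ range k, Q u
  have hrow : ∀ i, m (z i) * B i = ∑ j, m (z i) * r (z i) (z j) * (P j - P i) := by
    intro i
    rw [hB, ← sum_sub_distrib, mul_sum]
    refine sum_congr rfl fun j _ => ?_
    rw [mul_assoc, ← ite_sum_Ico_sub_ite_sum_Ico]
    simp only [Fin.lt_def, mul_ite, mul_zero, mul_sub]
  rw [sum_congr rfl fun i _ => hrow i]
  exact sum_sum_mul_sub_eq_zero _
    (balanced_comp_of_bijective (fun x y => m x * r x y) hinv hz) P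

theorem stmt_19 {S : Type*} [Fintype S]
    (r : S → S → ℝ) (hr : ∀ x y, 0 ≤ r x y)
    (m : S → ℝ) (hm : ∀ x, 0 < m x)
    (hinv : ∀ x, ∑ y, m x * r x y = ∑ y, m y * r y x)
    (κ : ℕ) (hκ : κ = Fintype.card S)
    (z : Fin κ → S) (hz : Function.Bijective z)
    (Q : ℕ → ℝ)
    (B : Fin κ → ℝ)
    (hB : ∀ i, B i =
      (∑ j : Fin κ, if i < j then
        r (z i) (z j) * ∑ u ∈ Finset.Ico (i : ℕ) (j : ℕ), Q u else 0) -
      (∑ j : Fin κ, if j < i then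
        r (z i) (z j) * ∑ u ∈ Finset.Ico (j : ℕ) (i : ℕ), Q u else 0)) :
    ∑ i, m (z i) * B i = 0 :=
  stmt_19_general r m hinv κ z hz Q B hB
end
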